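/- arXiv:0712.1762 — 10 statements merged into one kernel-verified Lean document; each statement's English description precedes it below -/
import Mathlib

section
/- For integers n ≥ 1 and 1 ≤ k ≤ n: ∑_{j=k}^n (1 - q^{n-2j}) · q^{j - n(n+1)/2} · [n+j choose n]_q · [2n-j choose n]_q = (1 - p^k) · p^{-n(n+1)/2} · [n+k choose n]_p · [2n+1-k choose n+1]_p, where p = 1/q. -/
open Finset

/-- The q-Pochhammer symbol `(a;q)_m`. -/
noncomputable def qPoch {K : Type*} [Field K] (q a : K) (m : ℕ) : K :=
  ∏ i ∈ Finset.range m, (1 - a * q ^ i)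

/-- The Gaussian (q-)binomial coefficient `[n choose k]_q`. -/
noncomputable def gbinom {K : Type*} [Field K] (q : K) (n k : ℕ) : K :=
  qPoch q q n / (qPoch q q k * qPoch q q (n - k))

/-!
After multiplying by `q ^ (n(n+1)/2)` the summand becomes
`(q^j - q^(n-j)) [n+j, n]_q [2n-j, n]_q`, and the sum telescopes:
`T k = (q^k - 1) [n+k, n]_q [2n+1-k, n+1]_q` satisfies `T k = summand k + T (k+1)`,
which reduces to a polynomial identity once the three Gaussian binomials of `T (k+1)` and `T k`
are expressed through `[n+k, n]_q` and `[2n-k, n]_q` by the ratio formulas for neighbouring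
Gaussian binomials. The right-hand side is `T k` written in `p = q⁻¹`, by
`[a+b, a]_{q⁻¹} = q^(-ab) [a+b, a]_q`.
-/

theorem Finset.sum_Icc_eq_of_eq_add_succ {M : Type*} [AddCommMonoid M] {f T : ℕ → M} {n : ℕ}
    (step : ∀ k < n, T k = f k + T (k + 1)) (last : T n = f n) {k : ℕ} (hk : k ≤ n) :
    ∑ j ∈ Icc k n, f j = T k := by
  induction hk using Nat.decreasingInduction with
  | self => rw [Icc_self, sum_singleton, last]
  | of_succ k hk ih =>
    rw [Icc_eq_cons_Ioc hk.le, sum_cons, ← Icc_add_one_left_eq_Ioc, ih, step k hk]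

section
variable {K : Type*} [Field K] {q : K}

theorem qPoch_zero (q a : K) : qPoch q a 0 = 1 := prod_range_zero _

theorem qPoch_succ (q : K) (m : ℕ) : qPoch q q (m + 1) = qPoch q q m * (1 - q ^ (m + 1)) := by
  rw [qPoch, prod_range_succ, ← qPoch, pow_succ']

theorem one_sub_pow_ne_zero (hq : ∀ m : ℕ, 1 ≤ m → q ^ m ≠ 1) {m : ℕ} (hm : m ≠ 0) :
    1 - q ^ m ≠ 0 :=
  sub_ne_zero.mpr (hq m (Nat.one_le_iff_ne_zero.mpr hm)).symm

theorem qPoch_ne_zero (hq : ∀ m : ℕ, 1 ≤ m → q ^ m ≠ 1) (m : ℕ) : qPoch q q m ≠ 0 :=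
  prod_ne_zero_iff.mpr fun i _ => pow_succ' q i ▸ one_sub_pow_ne_zero hq i.succ_ne_zero

theorem gbinom_add_left (q : K) (a b : ℕ) :
    gbinom q (a + b) a = qPoch q q (a + b) / (qPoch q q a * qPoch q q b) := by
  rw [gbinom, Nat.add_sub_cancel_left]

theorem gbinom_self (hq : ∀ m : ℕ, 1 ≤ m → q ^ m ≠ 1) (m : ℕ) : gbinom q m m = 1 := by
  rw [gbinom, Nat.sub_self, qPoch_zero, mul_one, div_self (qPoch_ne_zero hq m)]

theorem gbinom_succ_left (hq : ∀ m : ℕ, 1 ≤ m → q ^ m ≠ 1) (a b : ℕ) :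
    gbinom q (a + b + 1) a = gbinom q (a + b) a * (1 - q ^ (a + b + 1)) / (1 - q ^ (b + 1)) := by
  have := qPoch_ne_zero hq a
  have := qPoch_ne_zero hq b
  have := one_sub_pow_ne_zero hq b.succ_ne_zero
  rw [add_assoc, gbinom_add_left, ← add_assoc, gbinom_add_left, qPoch_succ, qPoch_succ, add_assoc]
  field_simp

theorem gbinom_succ_succ (hq : ∀ m : ℕ, 1 ≤ m → q ^ m ≠ 1) (a b : ℕ) :
    gbinom q (a + b + 1) (a + 1)
      = gbinom q (a + b) a * (1 - q ^ (a + b + 1)) / (1 - q ^ (a + 1)) := by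
  have := qPoch_ne_zero hq a
  have := qPoch_ne_zero hq b
  have := one_sub_pow_ne_zero hq a.succ_ne_zero
  have h := gbinom_add_left q (a + 1) b
  rw [add_right_comm] at h
  rw [h, gbinom_add_left, qPoch_succ, qPoch_succ]
  field_simp

theorem gbinom_succ_right (hq : ∀ m : ℕ, 1 ≤ m → q ^ m ≠ 1) (a b : ℕ) :
    gbinom q (a + b + 1) (a + 1)
      = gbinom q (a + b + 1) a * (1 - q ^ (b + 1)) / (1 - q ^ (a + 1)) := by
  have := qPoch_ne_zero hq a
  have := qPoch_ne_zero hq b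
  have := one_sub_pow_ne_zero hq a.succ_ne_zero
  have := one_sub_pow_ne_zero hq b.succ_ne_zero
  have h₁ := gbinom_add_left q (a + 1) b
  have h₂ := gbinom_add_left q a (b + 1)
  rw [add_right_comm] at h₁
  rw [← add_assoc] at h₂
  rw [h₁, h₂, qPoch_succ q a, qPoch_succ q b]
  field_simp

theorem qPoch_inv (hq0 : q ≠ 0) (m : ℕ) :
    qPoch q⁻¹ q⁻¹ m = (∏ i ∈ range m, -q⁻¹ ^ (i + 1)) * qPoch q q m := by
  rw [qPoch, qPoch, ← prod_mul_distrib]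
  refine prod_congr rfl fun i _ => ?_
  rw [← pow_succ', ← pow_succ', inv_pow]
  field_simp
  ring

theorem gbinom_inv (hq0 : q ≠ 0) (a b : ℕ) :
    gbinom q⁻¹ (a + b) a = gbinom q (a + b) a * q⁻¹ ^ (a * b) := by
  have hc : ∀ m, ∏ i ∈ range m, -q⁻¹ ^ (i + 1) ≠ 0 := fun m =>
    prod_ne_zero_iff.mpr fun i _ => neg_ne_zero.mpr (pow_ne_zero _ (inv_ne_zero hq0))
  have hsplit : ∏ i ∈ range (a + b), -q⁻¹ ^ (i + 1)
      = (∏ i ∈ range a, -q⁻¹ ^ (i + 1)) * (∏ i ∈ range b, -q⁻¹ ^ (i + 1))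
          * q⁻¹ ^ (a * b) := by
    have hshift : ∏ i ∈ range b, -q⁻¹ ^ (a + i + 1)
        = ∏ i ∈ range b, -q⁻¹ ^ (i + 1) * q⁻¹ ^ a :=
      prod_congr rfl fun i _ => by ring
    rw [prod_range_add, hshift, prod_mul_distrib, prod_const, card_range, pow_mul, mul_assoc]
  rw [gbinom_add_left, gbinom_add_left, qPoch_inv hq0, qPoch_inv hq0, qPoch_inv hq0, hsplit,
    mul_right_comm _ (q⁻¹ ^ (a * b)), mul_div_right_comm, mul_mul_mul_comm _ (qPoch q q a),
    mul_div_mul_left _ _ (mul_ne_zero (hc a) (hc b))]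

theorem gbinom_telescope_step (hq : ∀ m : ℕ, 1 ≤ m → q ^ m ≠ 1) {n k : ℕ}
    (hkn : k < n) :
    (q ^ k - 1) * gbinom q (n + k) n * gbinom q (2 * n + 1 - k) (n + 1)
      = (q ^ k - q ^ (n - k)) * gbinom q (n + k) n * gbinom q (2 * n - k) n
        + (q ^ (k + 1) - 1) * gbinom q (n + (k + 1)) n
          * gbinom q (2 * n + 1 - (k + 1)) (n + 1) := by
  obtain ⟨d, hd⟩ : ∃ d, n = k + d + 1 := ⟨n - k - 1, by omega⟩
  rw [show 2 * n + 1 - k = n + (d + 1) + 1 by omega, show 2 * n - k = n + (d + 1) by omega,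
    show 2 * n + 1 - (k + 1) = n + d + 1 by omega, show n - k = d + 1 by omega,
    gbinom_succ_succ hq n (d + 1), gbinom_succ_right hq n d, add_assoc n d 1, ← add_assoc n k 1,
    gbinom_succ_left hq n k]
  have := one_sub_pow_ne_zero hq k.succ_ne_zero
  have := one_sub_pow_ne_zero hq n.succ_ne_zero
  subst hd
  field_simp
  ring

theorem sum_Icc_sub_mul_gbinom_mul_gbinom (hq : ∀ m : ℕ, 1 ≤ m → q ^ m ≠ 1) {n k : ℕ}
    (hkn : k ≤ n) :
    ∑ j ∈ Icc k n, (q ^ j - q ^ (n - j)) * gbinom q (n + j) n * gbinom q (2 * n - j) n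
      = (q ^ k - 1) * gbinom q (n + k) n * gbinom q (2 * n + 1 - k) (n + 1) := by
  apply sum_Icc_eq_of_eq_add_succ (M := K) ?_ ?_ hkn
  · exact fun _ hk => gbinom_telescope_step hq hk
  rw [Nat.sub_self, pow_zero, two_mul, Nat.add_sub_cancel, add_assoc, Nat.add_sub_cancel_left,
    gbinom_self hq, gbinom_self hq]

end

theorem stmt2_general {K : Type*} [Field K] (q : K) (hq0 : q ≠ 0)
    (hq : ∀ m : ℕ, 1 ≤ m → q ^ m ≠ 1)
    (n k : ℕ) (hkn : k ≤ n) :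
    ∑ j ∈ Finset.Icc k n,
        (1 - q ^ ((n : ℤ) - 2 * j)) * q ^ ((j : ℤ) - (n * (n + 1) / 2 : ℕ))
          * gbinom q (n + j) n * gbinom q (2 * n - j) n
      = (1 - q⁻¹ ^ (k : ℤ)) * q⁻¹ ^ (-((n * (n + 1) / 2 : ℕ) : ℤ))
        * gbinom q⁻¹ (n + k) n * gbinom q⁻¹ (2 * n + 1 - k) (n + 1) := by
  set T := n * (n + 1) / 2
  have hT : q ^ T * q ^ T = q ^ (n * k) * q ^ ((n + 1) * (n - k)) * q ^ k := by
    rw [← pow_add, ← pow_add, ← pow_add, ← two_mul,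
      Nat.two_mul_div_two_of_even n.even_mul_succ_self]
    obtain ⟨d, rfl⟩ : ∃ d, n = k + d := ⟨n - k, by omega⟩
    rw [Nat.add_sub_cancel_left]
    ring
  have hsummand : ∀ j ∈ Icc k n, (1 - q ^ ((n : ℤ) - 2 * j)) * q ^ ((j : ℤ) - T)
      * gbinom q (n + j) n * gbinom q (2 * n - j) n
      = (q ^ j - q ^ (n - j)) * gbinom q (n + j) n * gbinom q (2 * n - j) n / q ^ T := by
    intro j hj
    have hjn : ((n - j : ℕ) : ℤ) = n - j := Nat.cast_sub (mem_Icc.mp hj).2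
    rw [show (n : ℤ) - 2 * j = (n - j : ℕ) - j by omega, zpow_sub₀ hq0, zpow_sub₀ hq0,
      zpow_natCast, zpow_natCast, zpow_natCast]
    field_simp
  rw [sum_congr rfl hsummand, ← sum_div, sum_Icc_sub_mul_gbinom_mul_gbinom hq hkn,
    show 2 * n + 1 - k = (n + 1) + (n - k) by omega, gbinom_inv hq0, gbinom_inv hq0]
  simp only [zpow_neg, zpow_natCast, inv_pow, inv_inv]
  field_simp
  rw [sq, hT]
  ring

/-- a finite very-well-poised q-binomial identity with `p = q⁻¹`. -/
theorem stmt2 {K : Type*} [Field K] (q : K) (hq0 : q ≠ 0)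
    (hq : ∀ m : ℕ, 1 ≤ m → q ^ m ≠ 1)
    (n k : ℕ) (hk : 1 ≤ k) (hkn : k ≤ n) :
    ∑ j ∈ Finset.Icc k n,
        (1 - q ^ ((n : ℤ) - 2 * j)) * q ^ ((j : ℤ) - (n * (n + 1) / 2 : ℕ))
          * gbinom q (n + j) n * gbinom q (2 * n - j) n
      = (1 - q⁻¹ ^ (k : ℤ)) * q⁻¹ ^ (-((n * (n + 1) / 2 : ℕ) : ℤ))
        * gbinom q⁻¹ (n + k) n * gbinom q⁻¹ (2 * n + 1 - k) (n + 1) :=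
  stmt2_general q hq0 hq n k hkn
end

section
/- For integers n ≥ 1 and 1 ≤ k ≤ n: -∑_{j=k}^n (n - 2j) · C(n,j)² = k · C(n,k) · C(n-1,k-1), where C denotes the binomial coefficient. -/
/-!
The summand telescopes: with `g j = n * C(n-1, j-1)²`, Pascal's rule and the absorption
identity `n * C(n-1, j-1) = j * C(n, j)` give `(n - 2j) C(n,j)² = g (j+1) - g j` for `j ≥ 1`.
Summing from `k` to `n` leaves `-g k` since `g (n+1) = 0`, and absorption once more turns
`g k` into `k C(n,k) C(n-1,k-1)`.
-/

theorem Nat.mul_choose_sub_one_sub_one {n k : ℕ} (hk : 0 < k) :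
    n * (n - 1).choose (k - 1) = k * n.choose k := by
  obtain ⟨l, rfl⟩ : ∃ l, k = l + 1 := ⟨k - 1, by omega⟩
  cases n with
  | zero => simp
  | succ m => simpa [mul_comm] using Nat.add_one_mul_choose_eq m l

theorem sub_two_mul_mul_choose_sq {n j : ℕ} (hj : 0 < j) :
    ((n : ℤ) - 2 * j) * (n.choose j : ℤ) ^ 2
      = n * (((n - 1).choose j : ℤ) ^ 2 - ((n - 1).choose (j - 1) : ℤ) ^ 2) := by
  rcases Nat.eq_zero_or_pos n with rfl | hn
  · simp [Nat.choose_eq_zero_of_lt hj]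
  have pascal : (n.choose j : ℤ) = (n - 1).choose (j - 1) + (n - 1).choose j := by
    exact_mod_cast Nat.choose_eq_choose_pred_add hn hj
  have absorb : (n : ℤ) * (n - 1).choose (j - 1) = j * n.choose j := by
    exact_mod_cast Nat.mul_choose_sub_one_sub_one (n := n) hj
  linear_combination 2 * (n.choose j : ℤ) * absorb
    + n * ((n.choose j : ℤ) + (n - 1).choose j - (n - 1).choose (j - 1)) * pascal

/-- `-∑_{j=k}^n (n - 2j) C(n,j)² = k C(n,k) C(n-1,k-1)`. -/
theorem stmt5 (n k : ℕ) (hk : 1 ≤ k) (hkn : k ≤ n) :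
    -∑ j ∈ Finset.Icc k n, ((n : ℤ) - 2 * j) * (n.choose j : ℤ) ^ 2
      = k * (n.choose k : ℤ) * ((n - 1).choose (k - 1) : ℤ) := by
  set g : ℕ → ℤ := fun j => n * ((n - 1).choose (j - 1) : ℤ) ^ 2
  have telescope : ∀ j ∈ Finset.Icc k n,
      ((n : ℤ) - 2 * j) * (n.choose j : ℤ) ^ 2 = g (j + 1) - g j := by
    intro j hj
    rw [sub_two_mul_mul_choose_sq (hk.trans (Finset.mem_Icc.1 hj).1)]
    simp only [g, Nat.add_sub_cancel]
    ring
  have top : g (n + 1) = 0 := by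
    simp [g, Nat.choose_eq_zero_of_lt (show n - 1 < n by omega)]
  have absorb : (n : ℤ) * (n - 1).choose (k - 1) = k * n.choose k := by
    exact_mod_cast Nat.mul_choose_sub_one_sub_one (n := n) hk
  rw [Finset.sum_congr rfl telescope, Finset.sum_Icc_sub hkn, top]
  linear_combination ((n - 1).choose (k - 1) : ℤ) * absorb
end

section
/- For integers n ≥ 1 and 1 ≤ k ≤ n: -∑_{j=k}^n (n - 2j) · C(n+j, n) · C(2n-j, n) = k · C(n+k, k) · C(2n+1-k, n+1). -/
lemma stmt6_step (n k : ℕ) (hk : k + 1 ≤ n) :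
    (k : ℤ) * ((n + k).choose k : ℤ) * ((2 * n + 1 - k).choose (n + 1) : ℤ)
      + ((n : ℤ) - 2 * k) * ((n + k).choose n : ℤ) * ((2 * n - k).choose n : ℤ)
    = ((k : ℤ) + 1) * ((n + (k + 1)).choose (k + 1) : ℤ)
        * ((2 * n + 1 - (k + 1)).choose (n + 1) : ℤ) := by
  have e1 : 2 * n + 1 - (k + 1) = 2 * n - k := by omega
  have e2 : 2 * n + 1 - k = (2 * n - k) + 1 := by omega
  have e3 : n + (k + 1) = (n + k) + 1 := by omega
  have e4 : (n + k).choose n = (n + k).choose k := Nat.choose_symm_add.symm ▸ rfl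
  rw [e1, e2, e3, Nat.choose_symm_add, Nat.choose_succ_succ]
  have hR1 : ((n + k + 1 : ℕ) : ℤ) * ((n + k).choose k : ℤ)
      = ((n + k + 1).choose (k + 1) : ℤ) * ((k : ℤ) + 1) := by
    exact_mod_cast congrArg (Nat.cast : ℕ → ℤ) (Nat.add_one_mul_choose_eq (n + k) k)
  have hR2' := Nat.choose_succ_right_eq (2 * n - k) n
  have e5 : 2 * n - k - n = n - k := by omega
  rw [e5] at hR2'
  have hR2 : ((2 * n - k).choose (n + 1) : ℤ) * ((n : ℤ) + 1)
      = ((2 * n - k).choose n : ℤ) * ((n : ℤ) - (k : ℤ)) := by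
    have := congrArg (Nat.cast : ℕ → ℤ) hR2'
    push_cast [Nat.cast_sub (by omega : k ≤ n)] at this
    linarith [this]
  push_cast at hR1 ⊢
  linear_combination ((2 * n - k).choose (n + 1) : ℤ) * hR1
    - ((n + k).choose k : ℤ) * hR2


lemma stmt6_base (n : ℕ) :
    -∑ j ∈ Finset.Icc n n,
        ((n : ℤ) - 2 * j) * ((n + j).choose n : ℤ) * ((2 * n - j).choose n : ℤ)
      = n * ((n + n).choose n : ℤ) * ((2 * n + 1 - n).choose (n + 1) : ℤ) := by
  rw [Finset.Icc_self, Finset.sum_singleton]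
  have e1 : 2 * n - n = n := by omega
  have e2 : 2 * n + 1 - n = n + 1 := by omega
  have e3 : n + n = 2 * n := by omega
  rw [e1, e2, e3, Nat.choose_self, Nat.choose_self]
  push_cast
  ring

/-- `-∑_{j=k}^n (n-2j) C(n+j,n) C(2n-j,n) = k C(n+k,k) C(2n+1-k,n+1)`. -/
theorem stmt6 (n k : ℕ) (hk : 1 ≤ k) (hkn : k ≤ n) :
    -∑ j ∈ Finset.Icc k n,
        ((n : ℤ) - 2 * j) * ((n + j).choose n : ℤ) * ((2 * n - j).choose n : ℤ)
      = k * ((n + k).choose k : ℤ) * ((2 * n + 1 - k).choose (n + 1) : ℤ) := by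
  have key : ∀ d k, 1 ≤ k → k ≤ n → n - k ≤ d →
      -∑ j ∈ Finset.Icc k n,
          ((n : ℤ) - 2 * j) * ((n + j).choose n : ℤ) * ((2 * n - j).choose n : ℤ)
        = k * ((n + k).choose k : ℤ) * ((2 * n + 1 - k).choose (n + 1) : ℤ) := by
    intro d
    induction d with
    | zero =>
      intro k hk hkn hle
      have hkn' : k = n := by omega
      rw [hkn']
      exact stmt6_base n
    | succ d ih =>
      intro k hk hkn hle
      rcases eq_or_lt_of_le hkn with h | h
      · rw [h]
        exact stmt6_base n
      · have hk1 : k + 1 ≤ n := h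
        have := ih (k + 1) (by omega) hk1 (by omega)
        rw [Finset.Icc_eq_cons_Ioc hkn, Finset.sum_cons, ← Finset.Icc_add_one_left_eq_Ioc]
        have hstep := stmt6_step n k hk1
        push_cast at this hstep ⊢
        linarith [this, hstep]
  exact key (n - k) k hk hkn le_rfl
end

section
/- For integers n ≥ 1 and 1 ≤ k ≤ n: -∑_{j=k}^n (n - 2j) · C(n+j, n) · C(2n-j, n) · C(n,j)² = k · ∑_{l=0}^{n-k} (-1)^l · C(n+k, k+l) · C(n-l-1, k-1) · (2n-k-l)!/(k!·(n-k)!·(n-k-l)!). -/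
/-!
Write the right-hand side as `∑ₗ F(k, l)` with
`F(k, l) = k C(n,k) (-1)^l C(n+k,k+l) C(n-l-1,k-1) C(2n-k-l,n)`, using that the multinomial
coefficient equals `C(n,k) C(2n-k-l,n)`. Both `l ↦ F(k, l)` and `k ↦ F(k, l)` are hypergeometric,
and with `G(k, l) = (n-l)(n-2k-l)/k² · F(k, l)` the pair `(F, G)` is a WZ pair:
`G(k, l+1) - G(k, l) = F(k, l) - F(k+1, l)`. Summing over `l` telescopes, and since
`G(k, 0)` is the `k`-th summand of the left-hand side and `G(k, n-k) = -F(k, n-k)`, the sums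
`S(k) = ∑ₗ F(k, l)` satisfy `S(k) - S(k+1) = -(k-th summand)`. Summing over `k`, with
`S(n+1) = 0`, gives the identity.
-/

open Finset

section CastChoose

variable {R : Type*} [CommRing R]

theorem Nat.cast_choose_succ_right_mul (m i : ℕ) :
    (m.choose (i + 1) : R) * (i + 1) = m.choose i * (m - i) := by
  rcases le_or_gt i m with him | him
  · have h := congrArg (Nat.cast (R := R)) (Nat.choose_succ_right_eq m i)
    push_cast [Nat.cast_sub him] at h
    exact h
  · simp [Nat.choose_eq_zero_of_lt him, Nat.choose_eq_zero_of_lt (Nat.lt_succ_of_lt him)]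

theorem Nat.cast_choose_mul_succ (m i : ℕ) :
    (m.choose i : R) * (m + 1) = (m + 1).choose i * (m + 1 - i) := by
  rcases le_or_gt i (m + 1) with him | him
  · have h := congrArg (Nat.cast (R := R)) (Nat.choose_mul_succ_eq m i)
    push_cast [Nat.cast_sub him] at h
    exact h
  · simp [Nat.choose_eq_zero_of_lt him, Nat.choose_eq_zero_of_lt (Nat.lt_of_succ_lt him)]

end CastChoose

theorem Nat.cast_choose_mul_choose (K : Type*) [Field K] [CharZero K] {a m b : ℕ}
    (ham : a ≤ m) (hmb : m ≤ b) :
    (m.choose a : K) * b.choose m =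
      b.factorial / (a.factorial * (m - a).factorial * (b - m).factorial) := by
  rw [Nat.cast_choose K ham, Nat.cast_choose K hmb]
  field_simp [Nat.factorial_ne_zero]

noncomputable def lhsTerm (n j : ℕ) : ℚ :=
  ((n : ℚ) - 2 * j) * ((n + j).choose n : ℚ) * ((2 * n - j).choose n : ℚ) * (n.choose j : ℚ) ^ 2

noncomputable def rhsTerm (n k l : ℕ) : ℚ :=
  (k : ℚ) * (n.choose k : ℚ) * (-1) ^ l * ((n + k).choose (k + l) : ℚ) *
    ((n - l - 1).choose (k - 1) : ℚ) * ((2 * n - k - l).choose n : ℚ)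

noncomputable def wzCert (n k l : ℕ) : ℚ :=
  ((n : ℚ) - l) * (n - 2 * k - l) / k ^ 2 * rhsTerm n k l

/-- Summing over `range (n + 1 - k)` rather than `range (n - k + 1)` makes `rhsSum n (n + 1)`
the empty sum. -/
noncomputable def rhsSum (n k : ℕ) : ℚ :=
  ∑ l ∈ range (n + 1 - k), rhsTerm n k l

section WZPair

variable {n k l : ℕ}

theorem rhsTerm_succ_right_mul (hk : 1 ≤ k) (h : k + l < n) :
    rhsTerm n k (l + 1) * ((k + l + 1) * (n - l - 1) * (2 * n - k - l))
      = -(rhsTerm n k l * ((n - l) * (n - k - l) ^ 2)) := by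
  have hA := Nat.cast_choose_succ_right_mul (R := ℚ) (n + k) (k + l)
  have hB := Nat.cast_choose_mul_succ (R := ℚ) (n - (l + 1) - 1) (k - 1)
  have hC := Nat.cast_choose_mul_succ (R := ℚ) (2 * n - k - (l + 1)) n
  rw [show n - (l + 1) - 1 + 1 = n - l - 1 by omega] at hB
  rw [show 2 * n - k - (l + 1) + 1 = 2 * n - k - l by omega] at hC
  have cB : ((n - (l + 1) - 1 : ℕ) : ℚ) = n - l - 2 := by
    rw [eq_sub_iff_add_eq, eq_sub_iff_add_eq]; norm_cast; omega
  have cC : ((2 * n - k - (l + 1) : ℕ) : ℚ) = 2 * n - k - l - 1 := by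
    rw [eq_sub_iff_add_eq, eq_sub_iff_add_eq, eq_sub_iff_add_eq]; norm_cast; omega
  have ck : ((k - 1 : ℕ) : ℚ) = k - 1 := by rw [Nat.cast_sub hk, Nat.cast_one]
  rw [cB, ck] at hB
  rw [cC] at hC
  push_cast at hA
  unfold rhsTerm
  rw [← add_assoc k l 1]
  set c : ℚ := k * n.choose k * (-1) ^ l
  set A₀ : ℚ := ((n + k).choose (k + l) : ℚ)
  set B₀ : ℚ := ((n - l - 1).choose (k - 1) : ℚ)
  set B₁ : ℚ := ((n - (l + 1) - 1).choose (k - 1) : ℚ)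
  set C₁ : ℚ := ((2 * n - k - (l + 1)).choose n : ℚ)
  linear_combination (-c * B₁ * C₁ * (n - l - 1) * (2 * n - k - l)) * hA
    + (-c * A₀ * (n - l) * C₁ * (2 * n - k - l)) * hB
    + (-c * A₀ * (n - l) * B₀ * (n - l - k)) * hC

theorem rhsTerm_succ_left_mul (hk : 1 ≤ k) (h : k + l < n) :
    rhsTerm n (k + 1) l * (k ^ 2 * (k + l + 1) * (2 * n - k - l))
      = rhsTerm n k l * ((n - k) * (n + k + 1) * (n - k - l) ^ 2) := by
  have hA := Nat.cast_choose_succ_right_mul (R := ℚ) n k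
  have hB := Nat.add_one_mul_choose_eq (n + k) (k + l)
  have hC := Nat.cast_choose_succ_right_mul (R := ℚ) (n - l - 1) (k - 1)
  have hD := Nat.cast_choose_mul_succ (R := ℚ) (2 * n - (k + 1) - l) n
  rw [Nat.sub_add_cancel hk] at hC
  rw [show 2 * n - (k + 1) - l + 1 = 2 * n - k - l by omega] at hD
  have cC : ((n - l - 1 : ℕ) : ℚ) = n - l - 1 := by
    rw [eq_sub_iff_add_eq, eq_sub_iff_add_eq]; norm_cast; omega
  have cD : ((2 * n - (k + 1) - l : ℕ) : ℚ) = 2 * n - k - l - 1 := by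
    rw [eq_sub_iff_add_eq, eq_sub_iff_add_eq, eq_sub_iff_add_eq]; norm_cast; omega
  have ck : ((k - 1 : ℕ) : ℚ) = k - 1 := by rw [Nat.cast_sub hk, Nat.cast_one]
  rw [cC, ck] at hC
  rw [cD] at hD
  replace hB := congrArg (Nat.cast (R := ℚ)) hB
  push_cast at hA hB
  unfold rhsTerm
  rw [Nat.add_sub_cancel, show k + 1 + l = k + l + 1 by omega, ← add_assoc n k 1]
  push_cast
  set c : ℚ := (-1) ^ l
  set A₀ : ℚ := (n.choose k : ℚ)
  set B₀ : ℚ := ((n + k).choose (k + l) : ℚ)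
  set B₁ : ℚ := ((n + k + 1).choose (k + l + 1) : ℚ)
  set C₀ : ℚ := ((n - l - 1).choose (k - 1) : ℚ)
  set C₁ : ℚ := ((n - l - 1).choose k : ℚ)
  set D₁ : ℚ := ((2 * n - (k + 1) - l).choose n : ℚ)
  linear_combination (c * k * B₁ * (k + l + 1) * C₁ * k * D₁ * (2 * n - k - l)) * hA
    - (c * k * A₀ * (n - k) * C₁ * k * D₁ * (2 * n - k - l)) * hB
    + (c * k * A₀ * (n - k) * B₀ * (n + k + 1) * D₁ * (2 * n - k - l)) * hC
    + (c * k * A₀ * (n - k) * B₀ * (n + k + 1) * C₀ * (n - l - k)) * hD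

theorem wzCert_succ_sub (hk : 1 ≤ k) (h : k + l < n) :
    wzCert n k (l + 1) - wzCert n k l = rhsTerm n k l - rhsTerm n (k + 1) l := by
  have hk' : (1 : ℚ) ≤ k := by exact_mod_cast hk
  have h' : (k : ℚ) + l + 1 ≤ n := by exact_mod_cast h
  have h₁ : (k : ℚ) + l + 1 ≠ 0 := by positivity
  have h₂ : (n : ℚ) - l - 1 ≠ 0 := by linarith
  -- stated in the normal form `field_simp` gives to `2 * n - k - l`
  have h₃ : (n : ℚ) * 2 - k - l ≠ 0 := by linarith
  have h₄ : (k : ℚ) ≠ 0 := by positivity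
  unfold wzCert
  rw [eq_div_of_mul_eq (by simp [*, mul_comm (2 : ℚ)]) (rhsTerm_succ_right_mul hk h),
    eq_div_of_mul_eq (by simp [*, mul_comm (2 : ℚ)]) (rhsTerm_succ_left_mul hk h)]
  push_cast
  field_simp
  ring

theorem wzCert_zero (hk : 1 ≤ k) (hkn : k ≤ n) : wzCert n k 0 = lhsTerm n k := by
  have hpascal : (n : ℚ) * (n - 1).choose (k - 1) = k * n.choose k := by
    have h := Nat.add_one_mul_choose_eq (n - 1) (k - 1)
    rw [Nat.sub_add_cancel (hk.trans hkn), Nat.sub_add_cancel hk, mul_comm _ k] at h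
    exact_mod_cast h
  have hk₀ : (k : ℚ) ≠ 0 := by positivity
  unfold wzCert rhsTerm lhsTerm
  rw [add_zero, Nat.sub_zero, Nat.sub_zero, Nat.choose_symm_add (a := n) (b := k), Nat.cast_zero]
  field_simp
  linear_combination ((n : ℚ) - 2 * k) * n.choose k * (n + k).choose k *
    (2 * n - k).choose n * hpascal

theorem wzCert_top (hk : 1 ≤ k) (hkn : k ≤ n) :
    wzCert n k (n - k) = -rhsTerm n k (n - k) := by
  have hk₀ : (k : ℚ) ≠ 0 := by positivity
  unfold wzCert
  rw [Nat.cast_sub hkn]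
  field_simp
  ring

theorem rhsSum_sub_succ (hk : 1 ≤ k) (hkn : k ≤ n) :
    rhsSum n k - rhsSum n (k + 1) = -lhsTerm n k := by
  have htele := Finset.sum_range_sub (wzCert n k) (n - k)
  rw [sum_congr rfl fun l hl => wzCert_succ_sub hk (by rw [mem_range] at hl; omega),
    sum_sub_distrib, wzCert_top hk hkn, wzCert_zero hk hkn] at htele
  rw [rhsSum, rhsSum, show n + 1 - k = n - k + 1 by omega, sum_range_succ,
    show n + 1 - (k + 1) = n - k by omega]
  linarith

theorem neg_sum_lhsTerm_eq_rhsSum (hk : 1 ≤ k) (hkn : k ≤ n) :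
    -∑ j ∈ Icc k n, lhsTerm n j = rhsSum n k := by
  have hstep : ∀ j ∈ Icc k n, rhsSum n (j + 1) - rhsSum n j = lhsTerm n j := by
    intro j hj
    rw [mem_Icc] at hj
    rw [← neg_sub, rhsSum_sub_succ (hk.trans hj.1) hj.2, neg_neg]
  have htele := Finset.sum_Icc_sub hkn (rhsSum n)
  rw [sum_congr rfl hstep, rhsSum, Nat.sub_self, sum_range_zero] at htele
  linarith

end WZPair

/-- `-∑_{j=k}^n (n-2j) C(n+j,n) C(2n-j,n) C(n,j)²
  = k ∑_{l=0}^{n-k} (-1)^l C(n+k,k+l) C(n-l-1,k-1) (2n-k-l)!/(k!(n-k)!(n-k-l)!)`. -/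
theorem stmt7 (n k : ℕ) (hk : 1 ≤ k) (hkn : k ≤ n) :
    -∑ j ∈ Finset.Icc k n,
        ((n : ℚ) - 2 * j) * ((n + j).choose n : ℚ) * ((2 * n - j).choose n : ℚ) *
          ((n.choose j : ℚ)) ^ 2
      = k * ∑ l ∈ Finset.range (n - k + 1),
          (-1 : ℚ) ^ l * ((n + k).choose (k + l) : ℚ) * ((n - l - 1).choose (k - 1) : ℚ) *
            (((2 * n - k - l).factorial : ℚ) /
              ((k.factorial : ℚ) * ((n - k).factorial : ℚ) * ((n - k - l).factorial : ℚ))) := by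
  refine (neg_sum_lhsTerm_eq_rhsSum hk hkn).trans ?_
  rw [rhsSum, show n + 1 - k = n - k + 1 by omega, mul_sum]
  refine sum_congr rfl fun l hl => ?_
  have hmultinomial := Nat.cast_choose_mul_choose ℚ hkn (show n ≤ 2 * n - k - l by
    rw [mem_range] at hl; omega)
  rw [show 2 * n - k - l - n = n - k - l by omega] at hmultinomial
  rw [rhsTerm, ← hmultinomial]
  ring
end

section
/- Let r ≥ 1, n ≥ 1, and let i, j be integers with 0 ≤ i ≤ j ≤ n. Then for every t ≥ 2 with t ≤ n, the quantity ⌊rn/t⌋ − r⌊n/t⌋ + ⌊(rn+i)/t⌋ − ⌊(n+i−j)/t⌋ − ⌊(rn−n+j)/t⌋ is nonnegative. -/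
lemma ediv_superadd (t a b : ℤ) (ht : 0 < t) : a / t + b / t ≤ (a + b) / t := by
  rw [Int.le_ediv_iff_mul_le ht]
  have ha := Int.mul_ediv_add_emod a t
  have hb := Int.mul_ediv_add_emod b t
  have ha' := Int.emod_nonneg a (by omega : t ≠ 0)
  have hb' := Int.emod_nonneg b (by omega : t ≠ 0)
  nlinarith

/-- a floor-function inequality
`⌊rn/t⌋ − r⌊n/t⌋ + ⌊(rn+i)/t⌋ − ⌊(n+i−j)/t⌋ − ⌊(rn−n+j)/t⌋ ≥ 0`. -/
theorem stmt10 (r n i j t : ℤ) (hr : 1 ≤ r) (hn : 1 ≤ n) (hi : 0 ≤ i)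
    (hij : i ≤ j) (hjn : j ≤ n) (ht2 : 2 ≤ t) (htn : t ≤ n) :
    0 ≤ Int.fdiv (r * n) t - r * Int.fdiv n t + Int.fdiv (r * n + i) t
        - Int.fdiv (n + i - j) t - Int.fdiv (r * n - n + j) t := by
  have ht : (0:ℤ) < t := by omega
  have ht0 : (0:ℤ) ≤ t := by omega
  rw [Int.fdiv_eq_ediv_of_nonneg _ ht0, Int.fdiv_eq_ediv_of_nonneg _ ht0, Int.fdiv_eq_ediv_of_nonneg _ ht0,
    Int.fdiv_eq_ediv_of_nonneg _ ht0, Int.fdiv_eq_ediv_of_nonneg _ ht0]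
  have h1 : r * (n / t) ≤ (r * n) / t := by
    rw [Int.le_ediv_iff_mul_le ht]
    have : (n / t) * t ≤ n := Int.ediv_mul_le n (by omega)
    nlinarith
  have h2 : (n + i - j) / t + (r * n - n + j) / t ≤ (r * n + i) / t := by
    have := ediv_superadd t (n + i - j) (r * n - n + j) ht
    have e : (n + i - j) + (r * n - n + j) = r * n + i := by ring
    rwa [e] at this
  omega
end

section
/- Let n ≥ 1, 1 ≤ k ≤ n, and 0 ≤ m₂ < m₁ ≤ n−k be integers, and let t ≥ 2. Then 1 + ⌊(m₁−m₂−1)/t⌋ − ⌊(k−1)/t⌋ + ⌊(k+m₂)/t⌋ − ⌊(k+m₁)/t⌋ + ⌊(n−m₁−1)/t⌋ − ⌊(n−k−m₁)/t⌋ ≥ 0. -/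
/-- the key floor-function inequality in the proof of the
q-denominator conjecture. -/
theorem stmt11 (n k m₁ m₂ t : ℤ) (hn : 1 ≤ n) (hk : 1 ≤ k) (hkn : k ≤ n)
    (hm₂ : 0 ≤ m₂) (hm : m₂ < m₁) (hm₁ : m₁ ≤ n - k) (ht : 2 ≤ t) :
    0 ≤ 1 + Int.fdiv (m₁ - m₂ - 1) t - Int.fdiv (k - 1) t + Int.fdiv (k + m₂) t
        - Int.fdiv (k + m₁) t + Int.fdiv (n - m₁ - 1) t - Int.fdiv (n - k - m₁) t := by
  have ht0 : (0:ℤ) < t := by omega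
  have hfd : ∀ x : ℤ, Int.fdiv x t = x / t := fun x => Int.fdiv_eq_ediv_of_nonneg x ht0.le
  rw [hfd, hfd, hfd, hfd, hfd, hfd]
  set X1 := m₁ - m₂ - 1 with hX1
  set X2 := k - 1 with hX2
  set X3 := k + m₂ with hX3
  set X4 := k + m₁ with hX4
  set X5 := n - m₁ - 1 with hX5
  set X6 := n - k - m₁ with hX6
  have e1 : t * (X1 / t) + X1 % t = X1 := Int.mul_ediv_add_emod X1 t
  have e2 : t * (X2 / t) + X2 % t = X2 := Int.mul_ediv_add_emod X2 t
  have e3 : t * (X3 / t) + X3 % t = X3 := Int.mul_ediv_add_emod X3 t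
  have e4 : t * (X4 / t) + X4 % t = X4 := Int.mul_ediv_add_emod X4 t
  have e5 : t * (X5 / t) + X5 % t = X5 := Int.mul_ediv_add_emod X5 t
  have e6 : t * (X6 / t) + X6 % t = X6 := Int.mul_ediv_add_emod X6 t
  have r1n : 0 ≤ X1 % t := Int.emod_nonneg X1 (by omega)
  have r3n : 0 ≤ X3 % t := Int.emod_nonneg X3 (by omega)
  have r2n : 0 ≤ X2 % t := Int.emod_nonneg X2 (by omega)
  have r6n : 0 ≤ X6 % t := Int.emod_nonneg X6 (by omega)
  have r1l : X1 % t < t := Int.emod_lt_of_pos X1 ht0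
  have r3l : X3 % t < t := Int.emod_lt_of_pos X3 ht0
  have r4n : 0 ≤ X4 % t := Int.emod_nonneg X4 (by omega)
  have r5l : X5 % t < t := Int.emod_lt_of_pos X5 ht0
  -- key relations
  have hX14 : X4 = X1 + X3 + 1 := by omega
  have hX56 : X5 = X2 + X6 := by omega
  have hd : t * (X1 / t + X3 / t - X4 / t) = X4 % t - X1 % t - X3 % t - 1 := by
    linear_combination e1 + e3 - e4 - hX14
  have he : t * (X5 / t - X2 / t - X6 / t) = X2 % t + X6 % t - X5 % t := by
    linear_combination e5 - e2 - e6 + hX56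
  have hdb : -2 < X1 / t + X3 / t - X4 / t :=
    lt_of_mul_lt_mul_left (by rw [hd]; omega) ht0.le
  have heb : -1 < X5 / t - X2 / t - X6 / t :=
    lt_of_mul_lt_mul_left (by rw [he]; omega) ht0.le
  clear hd he e1 e2 e3 e4 e5 e6
  omega
end

section
/- Let q be an indeterminate, let n ≥ 1, r ≥ 1, and 0 ≤ i ≤ j ≤ n be integers, and set R₁(q) = ((q;q)_{rn}/(q;q)_n^r) · ((q^{n+i-j+1};q)_{rn-n+j}/(q;q)_{rn-n+j}). Then for any integers 1 ≤ g₁ < g₂ < ⋯ < g_l ≤ rn−n+j, the rational function d_n(q)^l · R₁(q) / ∏_{m=1}^l (1 − q^{n+i-j+g_m}) lies in ℤ[q], where d_n(q) = ∏_{t=1}^n Φ_t(q). -/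
open Finset Polynomial

/-- The q-Pochhammer symbol `(a;q)_m` in `ℚ(q)`. -/
noncomputable def qP (q a : RatFunc ℚ) (m : ℕ) : RatFunc ℚ :=
  ∏ i ∈ Finset.range m, (1 - a * q ^ i)

/-- `d_n(q) = ∏_{t=1}^n Φ_t(q)` viewed in `ℚ(q)`. -/
noncomputable def dnR (n : ℕ) : RatFunc ℚ :=
  ∏ t ∈ Finset.Icc 1 n, (algebraMap (Polynomial ℚ) (RatFunc ℚ)) (Polynomial.cyclotomic t ℚ)

lemma Xpow_sub_one_ne_zero {k : ℕ} (hk : 1 ≤ k) : ((X:ℚ[X])^k - 1) ≠ 0 := by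
  intro h
  have h2 : (X:ℚ[X])^k = 1 := sub_eq_zero.mp h
  have := congrArg natDegree h2
  simp [natDegree_X_pow] at this
  omega

lemma card_Ioc_dvd (a b t : ℕ) (hab : a ≤ b) :
    ((Finset.Ioc a b).filter (fun k => t ∣ k)).card = b / t - a / t := by
  have h := Nat.Ioc_filter_dvd_card_eq_div b t
  have h2 := Nat.Ioc_filter_dvd_card_eq_div a t
  have hu : Finset.Ioc 0 a ∪ Finset.Ioc a b = Finset.Ioc 0 b :=
    Finset.Ioc_union_Ioc_eq_Ioc (Nat.zero_le a) hab
  have hd : Disjoint (Finset.Ioc 0 a) (Finset.Ioc a b) := by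
    rw [Finset.disjoint_left]
    intro x hx hx2
    simp only [Finset.mem_Ioc] at hx hx2
    omega
  have hcard : ((Finset.Ioc 0 a).filter (fun k => t ∣ k)).card
      + ((Finset.Ioc a b).filter (fun k => t ∣ k)).card
      = ((Finset.Ioc 0 b).filter (fun k => t ∣ k)).card := by
    rw [← hu, Finset.filter_union,
      Finset.card_union_of_disjoint (Finset.disjoint_filter_filter hd)]
  omega

lemma divisors_eq_filter {k K : ℕ} (hk1 : 1 ≤ k) (hkK : k ≤ K) :
    k.divisors = (Finset.Icc 1 K).filter (fun t => t ∣ k) := by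
  ext d
  simp only [Nat.mem_divisors, Finset.mem_filter, Finset.mem_Icc]
  constructor
  · rintro ⟨hd, -⟩
    exact ⟨⟨Nat.pos_of_dvd_of_pos hd (by omega), le_trans (Nat.le_of_dvd (by omega) hd) hkK⟩, hd⟩
  · rintro ⟨-, hd⟩
    exact ⟨hd, by omega⟩

lemma prod_cyclo_count (K : ℕ) (S : Finset ℕ) (hS : S ⊆ Finset.Icc 1 K) :
    ∏ k ∈ S, ((X:ℚ[X])^k - 1) =
      ∏ t ∈ Finset.Icc 1 K, (cyclotomic t ℚ) ^ (S.filter (fun k => t ∣ k)).card := by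
  calc ∏ k ∈ S, ((X:ℚ[X])^k - 1)
      = ∏ k ∈ S, ∏ t ∈ Finset.Icc 1 K, (if t ∣ k then cyclotomic t ℚ else 1) := by
        refine Finset.prod_congr rfl fun k hk => ?_
        have hm := Finset.mem_Icc.mp (hS hk)
        rw [← Polynomial.prod_cyclotomic_eq_X_pow_sub_one (by omega) ℚ,
          divisors_eq_filter hm.1 hm.2, Finset.prod_filter]
    _ = ∏ t ∈ Finset.Icc 1 K, ∏ k ∈ S, (if t ∣ k then cyclotomic t ℚ else 1) :=
        Finset.prod_comm
    _ = _ := by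
        refine Finset.prod_congr rfl fun t _ => ?_
        rw [← Finset.prod_filter, Finset.prod_const]

lemma prod_range_shift (M c : ℕ) (f : ℕ → ℚ[X]) :
    ∏ k ∈ Finset.range M, f (c + 1 + k) = ∏ k ∈ Finset.Ioc c (c + M), f k := by
  induction M with
  | zero => simp
  | succ m ih =>
    rw [Finset.prod_range_succ, ih, ← add_assoc,
      Finset.prod_Ioc_succ_top (by omega)]
    congr 2
    omega

lemma qP_eq (c M : ℕ) : qP RatFunc.X (RatFunc.X ^ (c+1)) M =
    algebraMap (Polynomial ℚ) (RatFunc ℚ)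
      ((-1)^M * ∏ k ∈ Finset.Ioc c (c+M), ((X:ℚ[X])^k - 1)) := by
  have hpoly : (∏ k ∈ Finset.range M, (1 - (X:ℚ[X]) ^ (c+1) * X ^ k))
      = (-1:ℚ[X])^M * ∏ k ∈ Finset.Ioc c (c+M), ((X:ℚ[X])^k - 1) := by
    calc ∏ k ∈ Finset.range M, (1 - (X:ℚ[X]) ^ (c+1) * X ^ k)
        = ∏ k ∈ Finset.range M, ((-1) * ((X:ℚ[X])^(c+1+k) - 1)) := by
          refine Finset.prod_congr rfl fun k _ => ?_
          rw [← pow_add]; ring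
      _ = (∏ _k ∈ Finset.range M, (-1:ℚ[X])) * ∏ k ∈ Finset.range M, ((X:ℚ[X])^(c+1+k) - 1) :=
          Finset.prod_mul_distrib
      _ = (-1:ℚ[X])^M * ∏ k ∈ Finset.Ioc c (c+M), ((X:ℚ[X])^k - 1) := by
          rw [Finset.prod_const, Finset.card_range,
            prod_range_shift M c (fun k => (X:ℚ[X])^k - 1)]
  rw [← hpoly, map_prod]
  unfold qP
  refine Finset.prod_congr rfl fun k _ => ?_
  rw [← RatFunc.algebraMap_X, ← map_pow, ← map_pow, ← map_mul, ← map_one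
    (algebraMap (Polynomial ℚ) (RatFunc ℚ)), ← map_sub]

lemma qP_eq' (M : ℕ) : qP RatFunc.X RatFunc.X M =
    algebraMap (Polynomial ℚ) (RatFunc ℚ)
      ((-1)^M * ∏ k ∈ Finset.Ioc 0 M, ((X:ℚ[X])^k - 1)) := by
  have := qP_eq 0 M
  simpa using this

lemma gprod_eq (l c : ℕ) (g : ℕ → ℕ) :
    ∏ m ∈ Finset.range l, (1 - RatFunc.X ^ (c + g m)) =
      algebraMap (Polynomial ℚ) (RatFunc ℚ)
        ((-1)^l * ∏ m ∈ Finset.range l, ((X:ℚ[X])^(c + g m) - 1)) := by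
  have hpoly : (∏ m ∈ Finset.range l, (1 - (X:ℚ[X]) ^ (c + g m)))
      = (-1:ℚ[X])^l * ∏ m ∈ Finset.range l, ((X:ℚ[X])^(c + g m) - 1) := by
    calc ∏ m ∈ Finset.range l, (1 - (X:ℚ[X]) ^ (c + g m))
        = ∏ m ∈ Finset.range l, ((-1) * ((X:ℚ[X])^(c + g m) - 1)) := by
          refine Finset.prod_congr rfl fun m _ => ?_; ring
      _ = (∏ _m ∈ Finset.range l, (-1:ℚ[X])) * ∏ m ∈ Finset.range l, ((X:ℚ[X])^(c + g m) - 1) :=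
          Finset.prod_mul_distrib
      _ = _ := by rw [Finset.prod_const, Finset.card_range]
  rw [← hpoly, map_prod]
  refine Finset.prod_congr rfl fun m _ => ?_
  rw [← RatFunc.algebraMap_X, ← map_pow, ← map_one
    (algebraMap (Polynomial ℚ) (RatFunc ℚ)), ← map_sub]

/-- `d_n(q)^l · R₁(q) / ∏_{m=1}^l (1 − q^{n+i−j+g_m})` lies in `ℤ[q]`,
where `R₁(q) = ((q;q)_{rn}/(q;q)_n^r)·((q^{n+i-j+1};q)_{rn-n+j}/(q;q)_{rn-n+j})`
and `1 ≤ g₁ < ⋯ < g_l ≤ rn−n+j`. -/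
theorem stmt12 (n r i j l : ℕ) (hn : 1 ≤ n) (hr : 1 ≤ r) (hi : 0 ≤ i)
    (hij : i ≤ j) (hjn : j ≤ n)
    (g : ℕ → ℕ) (hg1 : ∀ m, m < l → 1 ≤ g m) (hg2 : ∀ m, m < l → g m ≤ r * n - n + j)
    (hgmono : ∀ a b, a < b → b < l → g a < g b) :
    ∃ P : Polynomial ℤ,
      (algebraMap (Polynomial ℚ) (RatFunc ℚ)) (P.map (Int.castRingHom ℚ)) =
        (dnR n) ^ l
          * (qP RatFunc.X RatFunc.X (r * n) / (qP RatFunc.X RatFunc.X n) ^ r)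
          * (qP RatFunc.X (RatFunc.X ^ (n + i - j + 1)) (r * n - n + j)
              / qP RatFunc.X RatFunc.X (r * n - n + j))
          / ∏ m ∈ Finset.range l, (1 - RatFunc.X ^ (n + i - j + g m)) := by
  have hrn : n ≤ r * n := Nat.le_mul_of_pos_left n hr
  set a := n + i - j with ha
  set N := r * n - n + j with hNdef
  set K := r * n + i with hKdef
  have haN : a + N = K := by omega
  have hnK : n ≤ K := by omega
  clear_value a N K
  -- the exponent functions
  set Ae : ℕ → ℕ := fun t => (if t ≤ n then l else 0) + r * n / t + (K / t - a / t) with hAe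
  set Be : ℕ → ℕ := fun t =>
    n / t * r + N / t + ((Finset.range l).filter (fun m => t ∣ a + g m)).card with hBe
  refine ⟨(-1)^l * ∏ t ∈ Finset.Icc 1 K, (cyclotomic t ℤ) ^ (Ae t - Be t), ?_⟩
  have hPmap : (((-1:Polynomial ℤ)^l *
        ∏ t ∈ Finset.Icc 1 K, (cyclotomic t ℤ) ^ (Ae t - Be t)).map (Int.castRingHom ℚ))
      = (-1:ℚ[X])^l * ∏ t ∈ Finset.Icc 1 K, (cyclotomic t ℚ) ^ (Ae t - Be t) := by
    rw [Polynomial.map_mul, Polynomial.map_pow, Polynomial.map_neg, Polynomial.map_one,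
      Polynomial.map_prod]
    congr 1
    refine Finset.prod_congr rfl fun t _ => ?_
    rw [Polynomial.map_pow, map_cyclotomic]
  rw [hPmap]
  have hd_eq : dnR n = algebraMap (Polynomial ℚ) (RatFunc ℚ)
      (∏ t ∈ Finset.Icc 1 n, cyclotomic t ℚ) := by
    unfold dnR; rw [map_prod]
  have hcomb : ∀ (A B C D E F : RatFunc ℚ),
      A * (B / C) * (D / E) / F = (A * B * D) / (C * E * F) := by
    intros A B C D E F
    simp only [div_eq_mul_inv, mul_inv]
    ring
  rw [hd_eq, qP_eq' (r * n), qP_eq' n, qP_eq a N, qP_eq' N, gprod_eq l a g, hcomb]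
  simp only [← map_pow, ← map_mul]
  -- now the goal is M ((-1)^l * Qq) = M NUM / M DEN
  -- abbreviations
  set pd := ∏ t ∈ Finset.Icc 1 n, cyclotomic t ℚ with hpd_def
  set pA := ∏ k ∈ Finset.Ioc 0 (r * n), ((X:ℚ[X])^k - 1) with hpA_def
  set pB := ∏ k ∈ Finset.Ioc 0 n, ((X:ℚ[X])^k - 1) with hpB_def
  set pC := ∏ k ∈ Finset.Ioc a (a + N), ((X:ℚ[X])^k - 1) with hpC_def
  set pD := ∏ k ∈ Finset.Ioc 0 N, ((X:ℚ[X])^k - 1) with hpD_def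
  set pG := ∏ m ∈ Finset.range l, ((X:ℚ[X])^(a + g m) - 1) with hpG_def
  set Qq := ∏ t ∈ Finset.Icc 1 K, (cyclotomic t ℚ) ^ (Ae t - Be t) with hQq_def
  -- injectivity of m ↦ a + g m on range l
  have hinj : Set.InjOn (fun m => a + g m) ↑(Finset.range l) := by
    intro x hx y hy hxy
    simp only [Finset.coe_range, Set.mem_Iio] at hx hy
    simp only at hxy
    by_contra hne
    rcases Nat.lt_or_ge x y with h | h
    · have := hgmono x y h hy; omega
    · have hyx : y < x := by omega
      have := hgmono y x hyx hx; omega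
  -- subset facts
  have hS1 : Finset.Ioc 0 (r * n) ⊆ Finset.Icc 1 K := by
    intro k hk; simp only [Finset.mem_Ioc] at hk; simp only [Finset.mem_Icc]; omega
  have hS2 : Finset.Ioc 0 n ⊆ Finset.Icc 1 K := by
    intro k hk; simp only [Finset.mem_Ioc] at hk; simp only [Finset.mem_Icc]; omega
  have hS3 : Finset.Ioc a (a + N) ⊆ Finset.Icc 1 K := by
    intro k hk; simp only [Finset.mem_Ioc] at hk; simp only [Finset.mem_Icc]; omega
  have hS4 : Finset.Ioc 0 N ⊆ Finset.Icc 1 K := by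
    intro k hk; simp only [Finset.mem_Ioc] at hk; simp only [Finset.mem_Icc]; omega
  -- cyclotomic expansions
  have e1 : pA = ∏ t ∈ Finset.Icc 1 K, cyclotomic t ℚ ^ (r * n / t) := by
    rw [hpA_def, prod_cyclo_count K _ hS1]
    refine Finset.prod_congr rfl fun t _ => ?_
    congr 1
    exact Nat.Ioc_filter_dvd_card_eq_div (r * n) t
  have e2 : pB = ∏ t ∈ Finset.Icc 1 K, cyclotomic t ℚ ^ (n / t) := by
    rw [hpB_def, prod_cyclo_count K _ hS2]
    refine Finset.prod_congr rfl fun t _ => ?_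
    congr 1
    exact Nat.Ioc_filter_dvd_card_eq_div n t
  have e3 : pC = ∏ t ∈ Finset.Icc 1 K, cyclotomic t ℚ ^ (K / t - a / t) := by
    rw [hpC_def, prod_cyclo_count K _ hS3]
    refine Finset.prod_congr rfl fun t _ => ?_
    congr 1
    rw [card_Ioc_dvd a (a + N) t (by omega), haN]
  have e4 : pD = ∏ t ∈ Finset.Icc 1 K, cyclotomic t ℚ ^ (N / t) := by
    rw [hpD_def, prod_cyclo_count K _ hS4]
    refine Finset.prod_congr rfl fun t _ => ?_
    congr 1
    exact Nat.Ioc_filter_dvd_card_eq_div N t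
  have e5 : pG = ∏ t ∈ Finset.Icc 1 K, cyclotomic t ℚ ^
      ((Finset.range l).filter (fun m => t ∣ a + g m)).card := by
    have himg : pG = ∏ k ∈ (Finset.range l).image (fun m => a + g m), ((X:ℚ[X])^k - 1) := by
      rw [hpG_def, Finset.prod_image]
      intro x hx y hy hxy
      exact hinj (Finset.mem_coe.mpr hx) (Finset.mem_coe.mpr hy) hxy
    have hsub : (Finset.range l).image (fun m => a + g m) ⊆ Finset.Icc 1 K := by
      intro k hk
      simp only [Finset.mem_image, Finset.mem_range] at hk
      obtain ⟨m, hm, rfl⟩ := hk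
      have h1 := hg1 m hm
      have h2 := hg2 m hm
      simp only [Finset.mem_Icc]
      omega
    rw [himg, prod_cyclo_count K _ hsub]
    refine Finset.prod_congr rfl fun t _ => ?_
    congr 1
    rw [Finset.filter_image]
    exact Finset.card_image_of_injOn
      (hinj.mono (Finset.coe_subset.mpr (Finset.filter_subset _ _)))
  have e0 : pd ^ l = ∏ t ∈ Finset.Icc 1 K, cyclotomic t ℚ ^ (if t ≤ n then l else 0) := by
    have hf : Finset.Icc 1 n = (Finset.Icc 1 K).filter (fun t => t ≤ n) := by
      ext t; simp only [Finset.mem_Icc, Finset.mem_filter]; omega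
    rw [hpd_def, hf, ← Finset.prod_pow, Finset.prod_filter]
    refine Finset.prod_congr rfl fun t _ => ?_
    split <;> simp
  have e2r : pB ^ r = ∏ t ∈ Finset.Icc 1 K, cyclotomic t ℚ ^ (n / t * r) := by
    rw [e2, ← Finset.prod_pow]
    exact Finset.prod_congr rfl fun t _ => by rw [← pow_mul]
  -- the multiplicity inequality
  have hineq : ∀ t ∈ Finset.Icc 1 K, Be t ≤ Ae t := by
    intro t ht
    obtain ⟨ht1, htK⟩ := Finset.mem_Icc.mp ht
    have ht0 : 0 < t := ht1
    have h1 : a / t + N / t ≤ K / t := by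
      rw [← haN, Nat.le_div_iff_mul_le ht0, add_mul]
      exact add_le_add (Nat.div_mul_le_self a t) (Nat.div_mul_le_self N t)
    have h2 : a / t ≤ K / t := Nat.div_le_div_right (by omega)
    simp only [hAe, hBe]
    by_cases htn : t ≤ n
    · have h3 : ((Finset.range l).filter (fun m => t ∣ a + g m)).card ≤ l := by
        calc ((Finset.range l).filter (fun m => t ∣ a + g m)).card
            ≤ (Finset.range l).card := Finset.card_filter_le _ _
          _ = l := Finset.card_range l
      have h4 : n / t * r ≤ r * n / t := by
        rw [Nat.le_div_iff_mul_le ht0]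
        calc n / t * r * t = n / t * t * r := by ring
          _ ≤ n * r := Nat.mul_le_mul_right r (Nat.div_mul_le_self n t)
          _ = r * n := Nat.mul_comm n r
      simp only [if_pos htn]
      omega
    · push_neg at htn
      have h5 : n / t = 0 := Nat.div_eq_of_lt htn
      have h6 : N / t ≤ r * n / t := Nat.div_le_div_right (by omega)
      have h7 : ((Finset.range l).filter (fun m => t ∣ a + g m)).card ≤ K / t - a / t := by
        rw [← haN, ← card_Ioc_dvd a (a + N) t (by omega)]
        apply Finset.card_le_card_of_injOn (fun m => a + g m)
        · intro m hm
          simp only [Finset.mem_coe, Finset.mem_filter, Finset.mem_range] at hm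
          simp only [Finset.mem_coe, Finset.mem_filter, Finset.mem_Ioc]
          have hh1 := hg1 m hm.1
          have hh2 := hg2 m hm.1
          exact ⟨⟨by omega, by omega⟩, hm.2⟩
        · exact hinj.mono (Finset.coe_subset.mpr (Finset.filter_subset _ _))
      simp only [if_neg (by omega : ¬ t ≤ n), h5, Nat.zero_mul]
      omega
  -- the key divisibility identity
  have key : pd ^ l * pA * pC = (pB ^ r * pD * pG) * Qq := by
    rw [e0, e1, e3, e2r, e4, e5, hQq_def, ← Finset.prod_mul_distrib,
      ← Finset.prod_mul_distrib, ← Finset.prod_mul_distrib, ← Finset.prod_mul_distrib,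
      ← Finset.prod_mul_distrib]
    refine Finset.prod_congr rfl fun t ht => ?_
    rw [← pow_add, ← pow_add, ← pow_add, ← pow_add, ← pow_add]
    congr 1
    show Ae t = Be t + (Ae t - Be t)
    exact (Nat.add_sub_cancel' (hineq t ht)).symm
  -- sign bookkeeping
  have hs : ((-1:ℚ[X])^l) * ((-1:ℚ[X])^l) = 1 := by
    rw [← pow_add, show l + l = 2 * l by omega, pow_mul]
    norm_num
  have hNUM : pd ^ l * ((-1:ℚ[X]) ^ (r * n) * pA) * ((-1:ℚ[X]) ^ N * pC)
      = ((-1:ℚ[X]) ^ l * Qq) *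
        (((-1:ℚ[X]) ^ n * pB) ^ r * ((-1:ℚ[X]) ^ N * pD) * ((-1:ℚ[X]) ^ l * pG)) := by
    have h1 : ((-1:ℚ[X]) ^ n * pB) ^ r = (-1:ℚ[X]) ^ (r * n) * pB ^ r := by
      rw [mul_pow, ← pow_mul, Nat.mul_comm n r]
    rw [h1]
    calc pd ^ l * ((-1:ℚ[X]) ^ (r * n) * pA) * ((-1:ℚ[X]) ^ N * pC)
        = (-1:ℚ[X]) ^ (r * n) * (-1:ℚ[X]) ^ N * (pd ^ l * pA * pC) := by ring
      _ = (-1:ℚ[X]) ^ (r * n) * (-1:ℚ[X]) ^ N * ((pB ^ r * pD * pG) * Qq) := by rw [key]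
      _ = (((-1:ℚ[X])^l) * ((-1:ℚ[X])^l)) *
            ((-1:ℚ[X]) ^ (r * n) * (-1:ℚ[X]) ^ N * ((pB ^ r * pD * pG) * Qq)) := by
          rw [hs, one_mul]
      _ = _ := by ring
  -- denominator is nonzero
  have hneg : (-1:ℚ[X]) ≠ 0 := by
    intro h; exact one_ne_zero (by simpa using congrArg Neg.neg h : (1:ℚ[X]) = 0)
  have pBne : pB ≠ 0 := by
    rw [hpB_def]
    refine Finset.prod_ne_zero_iff.mpr fun k hk => ?_
    exact Xpow_sub_one_ne_zero (by simp only [Finset.mem_Ioc] at hk; omega)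
  have pDne : pD ≠ 0 := by
    rw [hpD_def]
    refine Finset.prod_ne_zero_iff.mpr fun k hk => ?_
    exact Xpow_sub_one_ne_zero (by simp only [Finset.mem_Ioc] at hk; omega)
  have pGne : pG ≠ 0 := by
    rw [hpG_def]
    refine Finset.prod_ne_zero_iff.mpr fun m hm => ?_
    have := hg1 m (Finset.mem_range.mp hm)
    exact Xpow_sub_one_ne_zero (by omega)
  have hDENne : ((-1:ℚ[X]) ^ n * pB) ^ r * ((-1:ℚ[X]) ^ N * pD) * ((-1:ℚ[X]) ^ l * pG) ≠ 0 :=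
    mul_ne_zero
      (mul_ne_zero (pow_ne_zero _ (mul_ne_zero (pow_ne_zero _ hneg) pBne))
        (mul_ne_zero (pow_ne_zero _ hneg) pDne))
      (mul_ne_zero (pow_ne_zero _ hneg) pGne)
  rw [hNUM, map_mul (algebraMap ℚ[X] (RatFunc ℚ)) ((-1:ℚ[X]) ^ l * Qq)
      (((-1:ℚ[X]) ^ n * pB) ^ r * ((-1:ℚ[X]) ^ N * pD) * ((-1:ℚ[X]) ^ l * pG)),
    mul_div_assoc, div_self (RatFunc.algebraMap_ne_zero hDENne), mul_one]
end

section
/- With R₀ as above, for every integer l ≥ 0: (d_{β−α−1}(q)^l / l!) · (d^l/du^l R₀)(u)|_{u=1} lies in ℤ[q, q⁻¹], where d_N(q) = lcm(q−1, …, q^N−1). -/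
open Finset

/-- The rational function
`R₀(u) = (1−u)(q;q)_{β−α−1}/(q^{α−γ}u;q)_{β−α}
       = (q;q)_{β−α−1} / ∏_{α ≤ j ≤ β−1, j ≠ γ} (1 − q^{j−γ}u)`
(the `(1-u)` factor cancels the `j = γ` factor of the denominator),
as a real function of `u`. -/
noncomputable def R0 (q : ℝ) (α β γ : ℤ) (u : ℝ) : ℝ :=
  (∏ i ∈ Finset.range (β - α - 1).toNat, (1 - q * q ^ i)) /
    ∏ j ∈ (Finset.Icc α (β - 1)).erase γ, (1 - q ^ (j - γ) * u)

/-- `d_N(q) = ∏_{t=1}^N Φ_t(q)`, the lcm of `q−1, …, q^N−1`, evaluated at a real `q`. -/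
noncomputable def dN (N : ℕ) (q : ℝ) : ℝ :=
  ∏ t ∈ Finset.Icc 1 N, (Polynomial.cyclotomic t ℝ).eval q

/-!
Partial fractions in `u` give `R₀(u) = ∑_{k ≠ γ} w_k / (1 - q^{k-γ} u)`, so
`R₀^{(l)}(1) / l! = ∑_k w_k q^{(k-γ)l} / (1 - q^{k-γ})^{l+1}`. Up to a sign and a power of `q`,
`w_k / (1 - q^{k-γ})` is the Gaussian binomial `[β-α-1, k-α]_q`, and since
`1 ≤ |k - γ| ≤ β - α - 1`, the polynomial `q^{|k-γ|} - 1` divides `d_{β-α-1}(q)`, which absorbs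
the remaining `l` factors `(1 - q^{k-γ})⁻¹`.
-/

open Polynomial Filter Topology

theorem inv_prod_one_sub_mul_eq_sum {K ι : Type*} [Field K] [DecidableEq ι] {s : Finset ι}
    (hs : s.Nonempty) {a : ι → K} (ha : Set.InjOn a s) (ha0 : ∀ i ∈ s, a i ≠ 0) {u : K}
    (hu : ∀ i ∈ s, 1 - a i * u ≠ 0) :
    (∏ i ∈ s, (1 - a i * u))⁻¹ =
      ∑ k ∈ s, (∏ j ∈ s.erase k, (1 - a j / a k))⁻¹ * (1 - a k * u)⁻¹ := by
  have hv : Set.InjOn (fun i => (a i)⁻¹) s := fun i hi j hj h => ha hi hj (inv_injective h)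
  -- each term times `∏ i ∈ s, (1 - a i * u)` is a Lagrange basis polynomial for the nodes `(a i)⁻¹`
  have hbasis : ∀ k ∈ s, (∏ j ∈ s.erase k, (1 - a j / a k))⁻¹ * (1 - a k * u)⁻¹ *
      ∏ i ∈ s, (1 - a i * u) = (Lagrange.basis s (fun i => (a i)⁻¹) k).eval u := by
    intro k hk
    rw [← mul_prod_erase s _ hk, mul_assoc, inv_mul_cancel_left₀ (hu k hk), Lagrange.basis,
      eval_prod, ← prod_inv_distrib, ← prod_mul_distrib]
    refine prod_congr rfl fun j hj => ?_
    obtain ⟨hjk, hj⟩ := mem_erase.1 hj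
    have hne : a j - a k ≠ 0 := sub_ne_zero.2 fun h => hjk (ha hj hk h)
    have hne' : a k - a j ≠ 0 := fun h => hne (by linear_combination -h)
    simp only [Lagrange.basisDivisor, eval_mul, eval_C, eval_sub, eval_X]
    field_simp [ha0 j hj, ha0 k hk, hne, hne']
    ring
  rw [eq_comm, ← mul_eq_one_iff_eq_inv₀ (prod_ne_zero_iff.2 hu), sum_mul, sum_congr rfl hbasis,
    ← eval_finsetSum, Lagrange.sum_basis hv hs, eval_one]

theorem iteratedDeriv_inv_one_sub_mul {𝕜 : Type*} [NontriviallyNormedField 𝕜] (a x : 𝕜)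
    (l : ℕ) :
    iteratedDeriv l (fun u => (1 - a * u)⁻¹) x = l.factorial * (a ^ l / (1 - a * x) ^ (l + 1)) := by
  have h := congrFun (iter_deriv_inv_linear l (-a) 1) x
  simp only [neg_mul, neg_add_eq_sub] at h
  have hsign : (-1 : 𝕜) ^ l * (-1) ^ l = 1 := by rw [← mul_pow]; norm_num
  rw [iteratedDeriv_eq_iterate, h, show (-1 - l : ℤ) = -((l + 1 : ℕ) : ℤ) by push_cast; ring,
    zpow_neg, zpow_natCast, neg_pow a, div_eq_mul_inv]
  linear_combination (l.factorial * a ^ l * ((1 - a * x) ^ (l + 1))⁻¹) * hsign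

theorem iteratedDeriv_inv_prod_one_sub_mul {𝕜 ι : Type*} [NontriviallyNormedField 𝕜]
    [DecidableEq ι] {s : Finset ι} (hs : s.Nonempty) {a : ι → 𝕜} (ha : Set.InjOn a s)
    (ha0 : ∀ i ∈ s, a i ≠ 0) {x : 𝕜} (hx : ∀ i ∈ s, 1 - a i * x ≠ 0) (l : ℕ) :
    iteratedDeriv l (fun u => (∏ i ∈ s, (1 - a i * u))⁻¹) x = l.factorial *
      ∑ k ∈ s, (∏ j ∈ s.erase k, (1 - a j / a k))⁻¹ * (a k ^ l / (1 - a k * x) ^ (l + 1)) := by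
  have hnear : ∀ᶠ u in 𝓝 x, ∀ i ∈ s, 1 - a i * u ≠ 0 :=
    (eventually_all_finset s).2 fun i hi => (by fun_prop : Continuous fun u => 1 - a i * u)
      |>.continuousAt.eventually_ne (hx i hi)
  have hpf : (fun u => (∏ i ∈ s, (1 - a i * u))⁻¹) =ᶠ[𝓝 x]
      fun u => ∑ k ∈ s, (∏ j ∈ s.erase k, (1 - a j / a k))⁻¹ * (1 - a k * u)⁻¹ := by
    filter_upwards [hnear] with u hu using inv_prod_one_sub_mul_eq_sum hs ha ha0 hu
  rw [hpf.iteratedDeriv_eq, iteratedDeriv_fun_sum, mul_sum]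
  · refine sum_congr rfl fun k _ => ?_
    rw [iteratedDeriv_const_mul_field, iteratedDeriv_inv_one_sub_mul, mul_left_comm]
  · intro k hk
    exact contDiffAt_const.mul
      ((contDiffAt_const.sub (contDiffAt_const.mul contDiffAt_id)).inv (hx k hk))

noncomputable def qPochhammer (n : ℕ) : ℤ[X] := ∏ i ∈ range n, (1 - X ^ (i + 1))

/-- The Gaussian binomial coefficient `[a + b, a]_X`, indexed by `a` and `b` so that the
`q`-Pascal rule involves no subtraction. -/
noncomputable def gaussBinomial : ℕ → ℕ → ℤ[X]
  | 0, _ => 1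
  | _ + 1, 0 => 1
  | a + 1, b + 1 => gaussBinomial a (b + 1) + X ^ (a + 1) * gaussBinomial (a + 1) b

theorem qPochhammer_succ (n : ℕ) : qPochhammer (n + 1) = qPochhammer n * (1 - X ^ (n + 1)) :=
  prod_range_succ _ n

theorem aeval_qPochhammer {A : Type*} [CommRing A] (q : A) (n : ℕ) :
    aeval q (qPochhammer n) = ∏ i ∈ range n, (1 - q * q ^ i) := by
  simp [qPochhammer, pow_succ']

theorem gaussBinomial_mul_qPochhammer_mul_qPochhammer (a b : ℕ) :
    gaussBinomial a b * (qPochhammer a * qPochhammer b) = qPochhammer (a + b) := by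
  induction a generalizing b with
  | zero => simp [gaussBinomial, qPochhammer]
  | succ a iha =>
    induction b with
    | zero => simp [gaussBinomial, qPochhammer]
    | succ b ihb =>
      have h := iha (b + 1)
      rw [qPochhammer_succ b, ← add_assoc] at h
      rw [qPochhammer_succ a, add_right_comm] at ihb
      rw [gaussBinomial, qPochhammer_succ a, qPochhammer_succ b,
        show a + 1 + (b + 1) = a + b + 1 + 1 by ring, qPochhammer_succ (a + b + 1)]
      linear_combination (1 - X ^ (a + 1)) * h + X ^ (a + 1) * (1 - X ^ (b + 1)) * ihb

theorem prod_erase_Icc_comp_sub {M : Type*} [CommMonoid M] (f : ℤ → M) {a k b : ℤ} (hak : a ≤ k)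
    (hkb : k ≤ b) :
    ∏ j ∈ (Icc a b).erase k, f (j - k) =
      (∏ t ∈ range (k - a).toNat, f (-(t + 1))) * ∏ t ∈ range (b - k).toNat, f (t + 1) := by
  have hsplit : (Icc a b).erase k = Ico a k ∪ Ioc k b := by
    ext j; simp only [mem_erase, mem_Icc, mem_union, mem_Ico, mem_Ioc]; omega
  have hdisj : Disjoint (Ico a k) (Ioc k b) :=
    disjoint_left.2 fun j hj hj' => by simp only [mem_Ico, mem_Ioc] at hj hj'; omega
  rw [hsplit, prod_union hdisj, Int.Ico_eq_finset_map, Int.Ioc_eq_finset_map, prod_map, prod_map,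
    ← prod_range_reflect]
  congr 1 <;> refine prod_congr rfl fun t ht => congrArg f ?_
  · simp only [mem_range] at ht
    simp only [Function.Embedding.trans_apply, Nat.castEmbedding_apply, addLeftEmbedding_apply]
    omega
  · simp only [Function.Embedding.trans_apply, Nat.castEmbedding_apply, addLeftEmbedding_apply]
    ring

section NotRootOfUnity

variable {K : Type*} [Field K] {q : K}

theorem zpow_ne_one_of_pow_ne_one (hq : ∀ i : ℕ, 1 ≤ i → q ^ i ≠ 1) {n : ℤ} (hn : n ≠ 0) :
    q ^ n ≠ 1 := by
  rcases Int.natAbs_eq n with h | h <;> rw [h]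
  · rw [zpow_natCast]; exact hq _ (by omega)
  · rw [zpow_neg, zpow_natCast, inv_ne_one]; exact hq _ (by omega)

theorem prod_one_sub_mul_pow_ne_zero (hq : ∀ i : ℕ, 1 ≤ i → q ^ i ≠ 1) (n : ℕ) :
    ∏ i ∈ range n, (1 - q * q ^ i) ≠ 0 :=
  prod_ne_zero_iff.2 fun i _ =>
    sub_ne_zero.2 fun h => hq (i + 1) (by omega) (by rw [pow_succ']; exact h.symm)

theorem prod_one_sub_mul_pow_div_prod_erase_Icc (hq0 : q ≠ 0) (hq : ∀ i : ℕ, 1 ≤ i → q ^ i ≠ 1)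
    {a k b : ℤ} (hak : a ≤ k) (hkb : k ≤ b) :
    (∏ i ∈ range (b - a).toNat, (1 - q * q ^ i)) / ∏ j ∈ (Icc a b).erase k, (1 - q ^ (j - k)) =
      aeval q (gaussBinomial (k - a).toNat (b - k).toNat *
        ∏ t ∈ range (k - a).toNat, -X ^ (t + 1)) := by
  have hsplit := prod_erase_Icc_comp_sub (fun s : ℤ => 1 - q ^ s) hak hkb
  have hpos : ∀ t : ℕ, (1 : K) - q ^ ((t : ℤ) + 1) = 1 - q * q ^ t := fun t => by
    rw [← Nat.cast_succ, zpow_natCast, pow_succ']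
  have hneg : ∀ t : ℕ, (1 : K) - q ^ (-((t : ℤ) + 1)) = (-(q * q ^ t))⁻¹ * (1 - q * q ^ t) := by
    intro t
    rw [zpow_neg, ← Nat.cast_succ, zpow_natCast, pow_succ']
    field_simp [pow_ne_zero t hq0]
    ring
  simp only [hneg, hpos, prod_mul_distrib] at hsplit
  rw [hsplit, show (b - a).toNat = (k - a).toNat + (b - k).toNat by omega, ← aeval_qPochhammer,
    ← gaussBinomial_mul_qPochhammer_mul_qPochhammer, map_mul, map_mul, map_mul,
    aeval_qPochhammer, aeval_qPochhammer, map_prod]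
  have h1 := prod_one_sub_mul_pow_ne_zero hq (k - a).toNat
  have h2 := prod_one_sub_mul_pow_ne_zero hq (b - k).toNat
  have h3 : ∏ t ∈ range (k - a).toNat, -(q * q ^ t) ≠ 0 :=
    prod_ne_zero_iff.2 fun t _ => neg_ne_zero.2 (mul_ne_zero hq0 (pow_ne_zero _ hq0))
  simp only [prod_inv_distrib, pow_succ', map_neg, map_mul, map_pow, aeval_X]
  field_simp

end NotRootOfUnity

/-- Functions that agree on `Q` with some integer Laurent polynomial `P(q) / q^m`; the condition
is written as `f q * q ^ m = P(q)` so that the ring axioms need no division. -/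
def intLaurentOn {K : Type*} [CommRing K] (Q : Set K) : Subring (K → K) where
  carrier := {f | ∃ (P : ℤ[X]) (m : ℕ), ∀ q ∈ Q, f q * q ^ m = aeval q P}
  mul_mem' := by
    rintro f g ⟨P, m, hf⟩ ⟨P', m', hg⟩
    refine ⟨P * P', m + m', fun q hq => ?_⟩
    rw [map_mul, ← hf q hq, ← hg q hq, Pi.mul_apply]
    ring
  one_mem' := ⟨1, 0, by simp⟩
  add_mem' := by
    rintro f g ⟨P, m, hf⟩ ⟨P', m', hg⟩
    refine ⟨P * X ^ m' + P' * X ^ m, m + m', fun q hq => ?_⟩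
    simp only [map_add, map_mul, map_pow, aeval_X, ← hf q hq, ← hg q hq, Pi.add_apply]
    ring
  zero_mem' := ⟨0, 0, by simp⟩
  neg_mem' := by
    rintro f ⟨P, m, hf⟩
    exact ⟨-P, m, fun q hq => by simp [← hf q hq]⟩

namespace intLaurentOn

variable {K : Type*} [Field K] {Q : Set K}

theorem aeval_mem (P : ℤ[X]) : (fun q => aeval q P) ∈ intLaurentOn Q :=
  ⟨P, 0, fun q _ => by simp⟩

theorem zpow_mem (hQ : ∀ q ∈ Q, q ≠ 0) (n : ℤ) : (fun q => q ^ n) ∈ intLaurentOn Q := by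
  obtain ⟨m, rfl | rfl⟩ := Int.eq_nat_or_neg n
  · exact ⟨X ^ m, 0, fun q _ => by simp⟩
  · exact ⟨1, m, fun q hq => by simp [zpow_neg, inv_mul_cancel₀ (pow_ne_zero m (hQ q hq))]⟩

theorem mem_of_eqOn {f g : K → K} (hf : f ∈ intLaurentOn Q) (hfg : Set.EqOn f g Q) :
    g ∈ intLaurentOn Q := by
  obtain ⟨P, m, hP⟩ := hf
  exact ⟨P, m, fun q hq => hfg hq ▸ hP q hq⟩

theorem exists_eq_aeval_div {f : K → K} (hf : f ∈ intLaurentOn Q) :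
    ∃ (P : ℤ[X]) (m : ℕ), ∀ q ∈ Q, q ≠ 0 → f q = aeval q P / q ^ m := by
  obtain ⟨P, m, hP⟩ := hf
  exact ⟨P, m, fun q hq hq0 => by rw [← hP q hq, mul_div_cancel_right₀ _ (pow_ne_zero m hq0)]⟩

theorem prod_one_sub_mul_pow_div_prod_erase_Icc_mem
    (hQ : ∀ q ∈ Q, q ≠ 0 ∧ ∀ i : ℕ, 1 ≤ i → q ^ i ≠ 1) {a k b : ℤ} (hak : a ≤ k) (hkb : k ≤ b) :
    (fun q => (∏ i ∈ range (b - a).toNat, (1 - q * q ^ i)) /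
      ∏ j ∈ (Icc a b).erase k, (1 - q ^ (j - k))) ∈ intLaurentOn Q :=
  mem_of_eqOn (aeval_mem _) fun q hq =>
    (prod_one_sub_mul_pow_div_prod_erase_Icc (hQ q hq).1 (hQ q hq).2 hak hkb).symm

end intLaurentOn

theorem dN_eq_aeval (N : ℕ) (q : ℝ) : dN N q = aeval q (∏ s ∈ Icc 1 N, cyclotomic s ℤ) := by
  simp [dN, map_prod, aeval_def, eval₂_eq_eval_map, map_cyclotomic]

theorem dN_eq_mul_aeval {N t : ℕ} (ht : 0 < t) (htN : t ≤ N) (q : ℝ) :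
    dN N q = (q ^ t - 1) * aeval q (∏ s ∈ Icc 1 N \ t.divisors, cyclotomic s ℤ) := by
  have hsub : t.divisors ⊆ Icc 1 N := fun s hs => by
    obtain ⟨hst, -⟩ := Nat.mem_divisors.1 hs
    exact mem_Icc.2 ⟨Nat.pos_of_dvd_of_pos hst ht, (Nat.le_of_dvd ht hst).trans htN⟩
  rw [dN_eq_aeval, ← prod_sdiff hsub, prod_cyclotomic_eq_X_pow_sub_one ht, map_mul, mul_comm]
  simp

theorem intLaurentOn.dN_div_zpow_sub_one_mem {Q : Set ℝ}
    (hQ : ∀ q ∈ Q, q ≠ 0 ∧ ∀ i : ℕ, 1 ≤ i → q ^ i ≠ 1) {N : ℕ} {n : ℤ} (hn : n ≠ 0)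
    (hnN : n.natAbs ≤ N) : (fun q => dN N q / (q ^ n - 1)) ∈ intLaurentOn Q := by
  have ht : 0 < n.natAbs := Int.natAbs_pos.2 hn
  have hpow : ∀ q ∈ Q, q ^ n.natAbs - 1 ≠ 0 := fun q hq => sub_ne_zero.2 ((hQ q hq).2 _ ht)
  have hpos : (fun q => dN N q / (q ^ (n.natAbs : ℤ) - 1)) ∈ intLaurentOn Q :=
    mem_of_eqOn (aeval_mem _) fun q hq => by
      rw [dN_eq_mul_aeval ht hnN, zpow_natCast, mul_div_cancel_left₀ _ (hpow q hq)]
  rcases Int.natAbs_eq n with h | h <;> rw [h]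
  · exact hpos
  · refine mem_of_eqOn (neg_mem (mul_mem (zpow_mem (fun q hq => (hQ q hq).1) n.natAbs) hpos))
      fun q hq => ?_
    have hq0 := pow_ne_zero n.natAbs (hQ q hq).1
    have h1 := hpow q hq
    have h2 : 1 - q ^ n.natAbs ≠ 0 := fun h => h1 (by linear_combination -h)
    simp only [Pi.neg_apply, Pi.mul_apply, zpow_neg, zpow_natCast]
    field_simp
    ring

section R0

variable {q : ℝ} {α β γ : ℤ}

theorem iteratedDeriv_R0_one (hq0 : q ≠ 0) (hq : ∀ i : ℕ, 1 ≤ i → q ^ i ≠ 1)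
    (hS : ((Icc α (β - 1)).erase γ).Nonempty) (l : ℕ) :
    iteratedDeriv l (R0 q α β γ) 1 = l.factorial * ∑ k ∈ (Icc α (β - 1)).erase γ,
      (∏ i ∈ range (β - α - 1).toNat, (1 - q * q ^ i)) *
        (∏ j ∈ ((Icc α (β - 1)).erase γ).erase k, (1 - q ^ (j - k)))⁻¹ *
        ((q ^ (k - γ)) ^ l / (1 - q ^ (k - γ)) ^ (l + 1)) := by
  have hR0 : R0 q α β γ = fun u => (∏ i ∈ range (β - α - 1).toNat, (1 - q * q ^ i)) *
      (∏ j ∈ (Icc α (β - 1)).erase γ, (1 - q ^ (j - γ) * u))⁻¹ :=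
    funext fun u => div_eq_mul_inv _ _
  have hinj : Set.InjOn (fun j => q ^ (j - γ)) ((Icc α (β - 1)).erase γ) := fun i _ j _ hij => by
    by_contra hne
    refine zpow_ne_one_of_pow_ne_one hq (sub_ne_zero.2 hne) ?_
    rw [← sub_sub_sub_cancel_right i j γ, zpow_sub₀ hq0, div_eq_one_iff_eq (zpow_ne_zero _ hq0)]
    exact hij
  have hpole : ∀ k ∈ (Icc α (β - 1)).erase γ, 1 - q ^ (k - γ) * 1 ≠ 0 := fun k hk => by
    rw [mul_one, sub_ne_zero, ne_comm]
    exact zpow_ne_one_of_pow_ne_one hq (sub_ne_zero.2 (mem_erase.1 hk).1)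
  rw [hR0, iteratedDeriv_const_mul_field,
    iteratedDeriv_inv_prod_one_sub_mul hS hinj (fun j _ => zpow_ne_zero _ hq0) hpole,
    mul_left_comm, mul_sum]
  refine congrArg _ (sum_congr rfl fun k _ => ?_)
  simp only [← zpow_sub₀ hq0, sub_sub_sub_cancel_right, mul_one, mul_assoc]

theorem dN_pow_div_factorial_mul_iteratedDeriv_R0_one (hq0 : q ≠ 0)
    (hq : ∀ i : ℕ, 1 ≤ i → q ^ i ≠ 1) (hγ : γ ∈ Icc α (β - 1))
    (hS : ((Icc α (β - 1)).erase γ).Nonempty) (l : ℕ) :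
    dN (β - α - 1).toNat q ^ l / l.factorial * iteratedDeriv l (R0 q α β γ) 1 =
      ∑ k ∈ (Icc α (β - 1)).erase γ,
        -((∏ i ∈ range (β - α - 1).toNat, (1 - q * q ^ i)) /
          ∏ j ∈ (Icc α (β - 1)).erase k, (1 - q ^ (j - k))) *
        q ^ (γ - k) * (dN (β - α - 1).toNat q / (q ^ (γ - k) - 1)) ^ l := by
  rw [iteratedDeriv_R0_one hq0 hq hS, ← mul_assoc,
    div_mul_cancel₀ _ (Nat.cast_ne_zero.2 l.factorial_ne_zero), mul_sum]
  refine sum_congr rfl fun k hk => ?_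
  have hkγ := (mem_erase.1 hk).1
  have hγk : γ ∈ (Icc α (β - 1)).erase k := mem_erase.2 ⟨hkγ.symm, hγ⟩
  rw [← mul_prod_erase _ _ hγk, erase_right_comm, ← neg_sub γ k, zpow_neg]
  have hb0 : q ^ (γ - k) ≠ 0 := zpow_ne_zero _ hq0
  have hb1 : q ^ (γ - k) - 1 ≠ 0 :=
    sub_ne_zero.2 (zpow_ne_one_of_pow_ne_one hq (sub_ne_zero.2 hkγ.symm))
  have hrest : ∏ j ∈ ((Icc α (β - 1)).erase k).erase γ, (1 - q ^ (j - k)) ≠ 0 :=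
    prod_ne_zero_iff.2 fun j hj => sub_ne_zero.2 fun h => zpow_ne_one_of_pow_ne_one hq
      (sub_ne_zero.2 (mem_erase.1 (mem_erase.1 hj).2).1) h.symm
  generalize q ^ (γ - k) = b at hb0 hb1 ⊢
  generalize ∏ j ∈ ((Icc α (β - 1)).erase k).erase γ, (1 - q ^ (j - k)) = P at hrest ⊢
  rw [show 1 - b⁻¹ = (b - 1) / b by field_simp, show 1 - b = -(b - 1) by ring, div_pow, div_pow,
    inv_pow, pow_succ, pow_succ b]
  field_simp

end R0

theorem intLaurentOn.dN_pow_div_factorial_mul_iteratedDeriv_R0_mem {Q : Set ℝ}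
    (hQ : ∀ q ∈ Q, q ≠ 0 ∧ ∀ i : ℕ, 1 ≤ i → q ^ i ≠ 1) {α β γ : ℤ} (hαγ : α ≤ γ) (hγβ : γ < β)
    (l : ℕ) :
    (fun q => dN (β - α - 1).toNat q ^ l / l.factorial * iteratedDeriv l (R0 q α β γ) 1) ∈
      intLaurentOn Q := by
  have hγ : γ ∈ Icc α (β - 1) := mem_Icc.2 ⟨hαγ, by omega⟩
  rcases ((Icc α (β - 1)).erase γ).eq_empty_or_nonempty with hS | hS
  · have hN : (β - α - 1).toNat = 0 := by
      have h := card_erase_of_mem hγ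
      rw [hS, Int.card_Icc, card_empty] at h
      omega
    have hR0 : ∀ q, R0 q α β γ = fun _ => 1 := fun q => funext fun u => by simp [R0, hN, hS]
    simp only [hR0, hN, dN, iteratedDeriv_const]
    obtain rfl | hl := eq_or_ne l 0
    · simp only [pow_zero, Nat.factorial_zero, Nat.cast_one, div_one, if_true, mul_one]
      exact one_mem _
    · simp only [hl, if_false, mul_zero]
      exact zero_mem _
  · refine mem_of_eqOn ?_ fun q hq =>
      (dN_pow_div_factorial_mul_iteratedDeriv_R0_one (hQ q hq).1 (hQ q hq).2 hγ hS l).symm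
    rw [← sum_fn]
    refine sum_mem fun k hk => ?_
    obtain ⟨hkγ, hkI⟩ := mem_erase.1 hk
    obtain ⟨hαk, hkβ⟩ := mem_Icc.1 hkI
    have hC := prod_one_sub_mul_pow_div_prod_erase_Icc_mem hQ hαk hkβ
    rw [sub_right_comm] at hC
    refine mul_mem (mul_mem (neg_mem hC) (zpow_mem (fun q hq => (hQ q hq).1) _)) (pow_mem ?_ l)
    exact dN_div_zpow_sub_one_mem hQ (sub_ne_zero.2 hkγ.symm) (by omega)

/-- `(d_{β−α−1}(q)^l / l!) · (d^l/du^l R₀)(u)|_{u=1} ∈ ℤ[q, q⁻¹]`,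
uniformly in `q` (not a root of unity). -/
theorem stmt15 (α β γ : ℤ) (hαγ : α ≤ γ) (hγβ : γ < β) (l : ℕ) :
    ∃ P : Polynomial ℤ, ∃ m : ℕ, ∀ q : ℝ, q ≠ 0 → (∀ i : ℕ, 1 ≤ i → q ^ i ≠ 1) →
      (dN (β - α - 1).toNat q) ^ l / (l.factorial : ℝ) * iteratedDeriv l (R0 q α β γ) 1
        = (Polynomial.aeval q P) / q ^ m := by
  obtain ⟨P, m, h⟩ := intLaurentOn.exists_eq_aeval_div
    (intLaurentOn.dN_pow_div_factorial_mul_iteratedDeriv_R0_mem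
      (Q := {q | q ≠ 0 ∧ ∀ i : ℕ, 1 ≤ i → q ^ i ≠ 1}) (fun _ hq => hq) hαγ hγβ l)
  exact ⟨P, m, fun q hq0 hq => h q ⟨hq0, hq⟩ hq0⟩
end

section
/- Let q be a real number with |q| < 1 and let d_n(q) = lcm(q−1, …, qⁿ−1). Then lim_{n→∞} (1/n²) · log|d_n(1/q)| = (3/π²) · log|1/q|. -/
open Filter Finset ArithmeticFunction
open scoped ArithmeticFunction.Moebius ArithmeticFunction.zeta



lemma aux_summable_mu : Summable (fun n : ℕ => (μ n : ℝ) / (n:ℝ)^2) := by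
  apply Summable.of_norm_bounded (g := fun n : ℕ => 1/(n:ℝ)^2)
    ((Real.summable_one_div_nat_pow).mpr one_lt_two)
  intro n
  rcases eq_or_ne n 0 with rfl | hn
  · simp
  · have h1 : ‖((μ n : ℝ))‖ ≤ 1 := by
      rw [Real.norm_eq_abs]
      exact_mod_cast abs_moebius_le_one (n := n)
    have h2 : (0:ℝ) < (n:ℝ)^2 := by positivity
    rw [norm_div, Real.norm_eq_abs ((n:ℝ)^2), abs_of_pos h2]
    gcongr

lemma aux_moebius_tsum : ∑' n : ℕ, (μ n : ℝ) / (n:ℝ)^2 = 6 / Real.pi ^ 2 := by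
  have h2 : (1:ℝ) < (2:ℂ).re := by norm_num
  have hz := LSeries_zeta_eq_riemannZeta h2
  have hm := LSeries_zeta_mul_Lseries_moebius h2
  rw [hz, riemannZeta_two] at hm
  have hpi : ((Real.pi : ℂ))^2 ≠ 0 := by
    simp [Real.pi_ne_zero]
  have hLmu : LSeries (fun n => ((μ n : ℤ) : ℂ)) 2 = 6 / (Real.pi:ℂ)^2 := by
    rw [eq_div_iff hpi]
    linear_combination 6 * hm
  have key : LSeries (fun n => ((μ n : ℤ) : ℂ)) 2
      = ((∑' n : ℕ, (μ n : ℝ) / (n:ℝ)^2 : ℝ) : ℂ) := by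
    rw [Complex.ofReal_tsum, LSeries]
    congr 1; funext n
    rw [LSeries.term_def]
    rcases eq_or_ne n 0 with rfl | hn
    · simp
    · have : ((n:ℂ)) ^ (2:ℂ) = (n:ℂ)^(2:ℕ) := by
        rw [show ((2:ℂ)) = ((2:ℕ):ℂ) by norm_num, Complex.cpow_natCast]
      rw [if_neg hn, this]
      push_cast
      ring
  rw [key] at hLmu
  have h6 : ((6 / Real.pi^2 : ℝ) : ℂ) = 6 / (Real.pi:ℂ)^2 := by push_cast; ring
  rw [← h6] at hLmu
  exact_mod_cast hLmu


lemma aux_swap (n : ℕ) (F : ℕ → ℕ → ℝ) :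
    ∑ t ∈ Icc 1 n, ∑ x ∈ t.divisorsAntidiagonal, F x.1 x.2
      = ∑ a ∈ Icc 1 n, ∑ b ∈ Icc 1 (n / a), F a b := by
  have step1 : ∀ t ∈ Icc 1 n,
      ∑ x ∈ t.divisorsAntidiagonal, F x.1 x.2
        = ∑ a ∈ Icc 1 n, ∑ b ∈ Icc 1 n, if a * b = t then F a b else 0 := by
    intro t ht
    rw [mem_Icc] at ht
    rw [← Finset.sum_product']
    rw [← Finset.sum_filter]
    apply Finset.sum_congr ?_ (fun _ _ => rfl)
    ext ⟨a, b⟩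
    simp only [Nat.mem_divisorsAntidiagonal, Finset.mem_filter, Finset.mem_product, mem_Icc]
    constructor
    · rintro ⟨hab, ht0⟩
      have ha : 0 < a := Nat.pos_of_ne_zero (by rintro rfl; simp at hab; omega)
      have hb : 0 < b := Nat.pos_of_ne_zero (by rintro rfl; simp at hab; omega)
      have hat : a ≤ t := hab ▸ Nat.le_mul_of_pos_right a hb
      have hbt : b ≤ t := hab ▸ Nat.le_mul_of_pos_left b ha
      exact ⟨⟨⟨ha, hat.trans ht.2⟩, ⟨hb, hbt.trans ht.2⟩⟩, hab⟩
    · rintro ⟨_, hab⟩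
      exact ⟨hab, by omega⟩
  rw [Finset.sum_congr rfl step1, Finset.sum_comm]
  apply Finset.sum_congr rfl
  intro a ha
  rw [mem_Icc] at ha
  rw [Finset.sum_comm]
  have step2 : ∀ b ∈ Icc 1 n,
      (∑ t ∈ Icc 1 n, if a * b = t then F a b else 0)
        = if b ∈ Icc 1 (n / a) then F a b else 0 := by
    intro b hb
    rw [mem_Icc] at hb
    rw [Finset.sum_ite_eq (Icc 1 n) (a * b)]
    congr 1
    simp only [mem_Icc, eq_iff_iff]
    constructor
    · rintro ⟨h1, h2⟩
      exact ⟨hb.1, (Nat.le_div_iff_mul_le ha.1).mpr (by rwa [mul_comm])⟩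
    · rintro ⟨h1, h2⟩
      refine ⟨Nat.one_le_iff_ne_zero.mpr (Nat.mul_ne_zero (by omega) (by omega)), ?_⟩
      calc a * b ≤ a * (n / a) := Nat.mul_le_mul_left a h2
        _ = (n / a) * a := mul_comm _ _
        _ ≤ n := Nat.div_mul_le_self n a
  rw [Finset.sum_congr rfl step2, Finset.sum_ite_mem]
  congr 1
  rw [Finset.inter_eq_right]
  exact Finset.Icc_subset_Icc le_rfl (Nat.div_le_self n a)


lemma aux_gauss (m : ℕ) : ∑ b ∈ Icc 1 m, (b:ℝ) = m * (m+1) / 2 := by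
  induction m with
  | zero => simp
  | succ k ih =>
    rw [Finset.sum_Icc_succ_top (by omega), ih]
    push_cast
    ring

lemma aux_div_tendsto (a : ℕ) (ha : 0 < a) :
    Tendsto (fun n : ℕ => ((n / a : ℕ) : ℝ) / n) atTop (nhds (1 / a)) := by
  have hlow : Tendsto (fun n : ℕ => 1/(a:ℝ) - 1/n) atTop (nhds (1 / a)) := by
    simpa using (tendsto_const_nhds (x := 1/(a:ℝ))).sub tendsto_one_div_atTop_nhds_zero_nat
  apply tendsto_of_tendsto_of_tendsto_of_le_of_le' hlow tendsto_const_nhds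
  · filter_upwards [eventually_ge_atTop 1] with n hn
    have hn0 : (0:ℝ) < n := by exact_mod_cast hn
    have ha0 : (0:ℝ) < a := by exact_mod_cast ha
    have key : (n:ℝ) < (((n/a : ℕ):ℝ) + 1) * a := by
      have : n < (n / a + 1) * a := (Nat.div_lt_iff_lt_mul ha).mp (Nat.lt_succ_self _)
      exact_mod_cast this
    have key2 : (n:ℝ)/a - 1 ≤ ((n/a : ℕ):ℝ) := by
      have := (div_lt_iff₀ ha0).mpr key
      linarith
    have heq : 1/(a:ℝ) - 1/n = ((n:ℝ)/a - 1)/n := by field_simp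
    rw [heq]
    gcongr
  · filter_upwards [eventually_ge_atTop 1] with n hn
    have hn0 : (0:ℝ) < n := by exact_mod_cast hn
    have ha0 : (0:ℝ) < a := by exact_mod_cast ha
    have h1 : ((n / a : ℕ) : ℝ) ≤ (n:ℝ) / a := Nat.cast_div_le
    calc ((n / a : ℕ) : ℝ) / n ≤ ((n:ℝ)/a) / n := by gcongr
      _ = 1 / a := by field_simp

lemma aux_totient_AD : ∀ t > 0,
    ∑ x ∈ t.divisorsAntidiagonal, (μ x.1) • ((x.2 : ℕ) : ℝ) = (t.totient : ℝ) := by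
  rw [← ArithmeticFunction.sum_eq_iff_sum_smul_moebius_eq
    (f := fun i => (i.totient : ℝ)) (g := fun i => (i : ℝ))]
  intro n hn
  exact_mod_cast congrArg (Nat.cast : ℕ → ℝ) (Nat.sum_totient n)

lemma aux_totient_sum : Tendsto (fun n : ℕ => (∑ t ∈ Icc 1 n, (Nat.totient t : ℝ)) / (n:ℝ)^2)
    atTop (nhds (3 / Real.pi^2)) := by
  set f : ℕ → ℕ → ℝ := fun n a => if a ∈ Icc 1 n then
    (μ a : ℝ) * (((n/a : ℕ):ℝ) * (((n/a : ℕ):ℝ) + 1) / 2) / (n:ℝ)^2 else 0 with hf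
  set g : ℕ → ℝ := fun a => (μ a : ℝ) / (2 * (a:ℝ)^2) with hg
  have key1 : ∀ n : ℕ, (∑ t ∈ Icc 1 n, (Nat.totient t : ℝ)) / (n:ℝ)^2 = ∑' a, f n a := by
    intro n
    rw [tsum_eq_sum (s := Icc 1 n) (by intro b hb; simp only [hf]; rw [if_neg hb])]
    have e1 : (∑ t ∈ Icc 1 n, (Nat.totient t : ℝ))
        = ∑ a ∈ Icc 1 n, (μ a : ℝ) * (((n/a : ℕ):ℝ) * (((n/a : ℕ):ℝ) + 1) / 2) := by
      rw [Finset.sum_congr rfl (fun t ht => (aux_totient_AD t (by rw [mem_Icc] at ht; omega)).symm)]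
      have := aux_swap n (fun a b => (μ a : ℝ) * (b : ℝ))
      simp only [zsmul_eq_mul] at *
      rw [this]
      apply Finset.sum_congr rfl
      intro a _
      rw [← Finset.mul_sum, aux_gauss]
    rw [e1, Finset.sum_div]
    apply Finset.sum_congr rfl
    intro a ha
    rw [hf]
    simp only [if_pos ha]
  have key2 : ∀ a : ℕ, Tendsto (fun n => f n a) atTop (nhds (g a)) := by
    intro a
    rcases Nat.eq_zero_or_pos a with rfl | ha
    · have : ∀ n, f n 0 = 0 := by intro n; simp [hf]
      simp only [this, hg]
      simpa using tendsto_const_nhds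
    · have ha0 : (0:ℝ) < a := by exact_mod_cast ha
      have hdiv := aux_div_tendsto a ha
      have hdiv1 : Tendsto (fun n : ℕ => (((n/a : ℕ):ℝ) + 1) / n) atTop (nhds (1/a)) := by
        have := hdiv.add tendsto_one_div_atTop_nhds_zero_nat
        simpa [add_div] using this
      have hprod := ((tendsto_const_nhds (x := (μ a : ℝ)/2)).mul hdiv).mul hdiv1
      have hlim : (μ a : ℝ)/2 * (1/a) * (1/a) = g a := by
        rw [hg]
        ring
      rw [← hlim]
      apply Tendsto.congr' ?_ hprod
      filter_upwards [eventually_ge_atTop a, eventually_ge_atTop 1] with n hna hn1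
      have hn0 : (n:ℝ) ≠ 0 := by
        have : (0:ℝ) < n := by exact_mod_cast hn1
        linarith
      simp only [hf, if_pos (mem_Icc.mpr ⟨ha, hna⟩)]
      field_simp
  have key3 : ∀ n : ℕ, ∀ a : ℕ, ‖f n a‖ ≤ 1/(a:ℝ)^2 := by
    intro n a
    rcases Decidable.em (a ∈ Icc 1 n) with hmem | hmem
    · rw [mem_Icc] at hmem
      have ha0 : (0:ℝ) < a := by exact_mod_cast hmem.1
      have hn0 : (0:ℝ) < n := by
        have : 1 ≤ n := le_trans hmem.1 hmem.2
        exact_mod_cast this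
      set x : ℝ := ((n/a : ℕ):ℝ) with hx
      have hx1 : (1:ℝ) ≤ x := by
        rw [hx]
        exact_mod_cast Nat.one_le_div_iff hmem.1 |>.mpr hmem.2
      have hxa : x * a ≤ n := by
        have h1 : x ≤ (n:ℝ)/a := Nat.cast_div_le
        calc x * a ≤ ((n:ℝ)/a) * a := by gcongr
          _ = n := by field_simp
      have hmu : |(μ a : ℝ)| ≤ 1 := by exact_mod_cast abs_moebius_le_one (n := a)
      have hGpos : (0:ℝ) ≤ x * (x + 1) / 2 := by positivity
      calc ‖f n a‖ = |(μ a : ℝ)| * (x * (x + 1) / 2) / (n:ℝ)^2 := by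
            simp only [hf, if_pos (mem_Icc.mpr hmem), Real.norm_eq_abs, abs_div, abs_mul,
              abs_of_nonneg hGpos, abs_of_nonneg (le_of_lt (by positivity : (0:ℝ) < (n:ℝ)^2))]
            rw [← hx, abs_of_nonneg (by positivity : (0:ℝ) ≤ x),
              abs_of_nonneg (by positivity : (0:ℝ) ≤ x + 1), abs_two]
        _ ≤ 1 * (x * (x + 1) / 2) / (n:ℝ)^2 := by gcongr
        _ ≤ 1/(a:ℝ)^2 := by
            rw [div_le_div_iff₀ (by positivity) (by positivity)]
            nlinarith [mul_le_mul hxa hxa (by positivity : (0:ℝ) ≤ x * a) hn0.le]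
    · simp only [hf, if_neg hmem, norm_zero]
      positivity
  have key4 : ∑' a, g a = 3 / Real.pi^2 := by
    have hgg : g = fun a => (1/2) * ((μ a : ℝ) / (a:ℝ)^2) := by
      funext a
      rw [hg]
      rcases Nat.eq_zero_or_pos a with rfl | ha
      · simp
      · have : ((a:ℝ))^2 ≠ 0 := by positivity
        field_simp
    rw [hgg, tsum_mul_left, aux_moebius_tsum]
    ring
  have := tendsto_tsum_of_dominated_convergence (f := f) (g := g)
    (bound := fun a : ℕ => 1/(a:ℝ)^2)
    ((Real.summable_one_div_nat_pow).mpr one_lt_two) key2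
    (Eventually.of_forall key3)
  rw [key4] at this
  exact this.congr (fun n => (key1 n).symm)

lemma aux_pow_ne (x : ℝ) (hx : 1 < |x|) (l : ℕ) (hl : 0 < l) : x ^ l - 1 ≠ 0 := by
  have h : 1 < |x ^ l| := by rw [abs_pow]; exact one_lt_pow₀ hx (by omega)
  intro h0
  rw [sub_eq_zero] at h0
  rw [h0] at h; simp at h

lemma aux_cyclo_ne (x : ℝ) (hx : 1 < |x|) (t : ℕ) (ht : 0 < t) :
    (Polynomial.cyclotomic t ℝ).eval x ≠ 0 := by
  have hprod : ∏ d ∈ t.divisors, (Polynomial.cyclotomic d ℝ).eval x = x ^ t - 1 := by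
    rw [← Polynomial.eval_prod, Polynomial.prod_cyclotomic_eq_X_pow_sub_one ht]
    simp
  intro h0
  apply aux_pow_ne x hx t ht
  rw [← hprod]
  exact Finset.prod_eq_zero (Nat.mem_divisors_self t (by omega)) h0

lemma aux_log_cyclo (x : ℝ) (hx : 1 < |x|) : ∀ t : ℕ, 0 < t →
    Real.log |(Polynomial.cyclotomic t ℝ).eval x| =
      ∑ p ∈ t.divisorsAntidiagonal, μ p.1 • Real.log |x ^ p.2 - 1| := by
  have := (ArithmeticFunction.sum_eq_iff_sum_smul_moebius_eq
    (f := fun t => Real.log |(Polynomial.cyclotomic t ℝ).eval x|)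
    (g := fun l => Real.log |x ^ l - 1|)).mp ?_
  · exact fun t ht => (this t ht).symm
  · intro l hl
    rw [← Real.log_prod
      (fun d hd => abs_ne_zero.mpr (aux_cyclo_ne x hx d (Nat.pos_of_mem_divisors hd)))]
    rw [← Finset.abs_prod, ← Polynomial.eval_prod,
      Polynomial.prod_cyclotomic_eq_X_pow_sub_one hl]
    simp

lemma aux_log_split (x : ℝ) (hx : 1 < |x|) (b : ℕ) (hb : 0 < b) :
    Real.log |x ^ b - 1| = b * Real.log |x| + Real.log |1 - x⁻¹ ^ b| := by
  have hx0 : x ≠ 0 := by intro h; rw [h] at hx; norm_num at hx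
  have h1 : x ^ b - 1 = x ^ b * (1 - x⁻¹ ^ b) := by
    rw [mul_sub, mul_one, ← mul_pow, mul_inv_cancel₀ hx0, one_pow]
  have hlt : |x⁻¹ ^ b| < 1 := by
    rw [abs_pow, abs_inv]
    exact pow_lt_one₀ (by positivity) (inv_lt_one_of_one_lt₀ hx) hb.ne'
  have h2 : (1 : ℝ) - x⁻¹ ^ b ≠ 0 := by
    intro h
    rw [sub_eq_zero] at h; rw [← h] at hlt; simp at hlt
  rw [h1, abs_mul, Real.log_mul (abs_ne_zero.mpr (pow_ne_zero b hx0)) (abs_ne_zero.mpr h2),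
    abs_pow, Real.log_pow]

lemma aux_E_bound (y : ℝ) (hy : |y| < 1) (b : ℕ) (hb : 0 < b) :
    |Real.log (|1 - y ^ b|)| ≤ |y| ^ b / (1 - |y|) := by
  have hr0 : (0:ℝ) ≤ |y| := abs_nonneg y
  set r := |y| with hr
  set s := r ^ b with hs
  have hs0 : (0:ℝ) ≤ s := by positivity
  have hsr : s ≤ r := by
    calc r ^ b ≤ r ^ 1 := pow_le_pow_of_le_one hr0 hy.le hb
      _ = r := pow_one r
  set z := |1 - y ^ b| with hz
  have hz1 : |z - 1| ≤ s := by
    have h := abs_abs_sub_abs_le_abs_sub (1 - y ^ b) 1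
    simpa [hz, hs, hr, abs_pow] using h
  have hle := abs_le.mp hz1
  have hzlow : 1 - r ≤ z := by linarith
  have hzpos : 0 < z := by linarith
  have h1r : (0:ℝ) < 1 - r := by linarith
  rw [abs_le]
  constructor
  · have h := Real.log_le_sub_one_of_pos (inv_pos.mpr hzpos)
    rw [Real.log_inv] at h
    have he : z⁻¹ - 1 = (1 - z) / z := by field_simp
    rw [he] at h
    have hd : (1 - z) / z ≤ s / (1 - r) := by
      rw [div_le_div_iff₀ hzpos h1r]
      nlinarith
    linarith
  · have h := Real.log_le_sub_one_of_pos hzpos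
    have hss : s ≤ s / (1 - r) := by
      rw [le_div_iff₀ h1r]
      nlinarith
    linarith

lemma aux_geom_tail (r : ℝ) (h0 : 0 ≤ r) (h1 : r < 1) (m : ℕ) :
    ∑ b ∈ Icc 1 m, r ^ b / (1 - r) ≤ r / (1 - r) ^ 2 := by
  have h1r : (0:ℝ) < 1 - r := by linarith
  have key : ∑ b ∈ Icc 1 m, r ^ b ≤ r / (1 - r) := by
    have e1 : ∑ b ∈ Icc 1 m, r ^ b = r * ∑ i ∈ range m, r ^ i := by
      rw [← Finset.Ico_add_one_right_eq_Icc, Finset.sum_Ico_eq_sum_range]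
      simp only [Nat.succ_sub_one, Nat.add_sub_cancel, pow_add, pow_one]
      rw [Finset.mul_sum]
    rw [e1]
    have e2 : ∑ i ∈ range m, r ^ i ≤ 1 / (1 - r) := by
      rcases eq_or_ne r 1 with rfl | hne
      · norm_num at h1
      · rw [geom_sum_eq hne]
        have e3 : (r ^ m - 1) / (r - 1) = (1 - r ^ m) / (1 - r) := by
          rw [div_eq_div_iff (by intro h; apply hne; linarith [sub_eq_zero.mp h]) h1r.ne']
          ring
        rw [e3]
        gcongr
        linarith [pow_nonneg h0 m]
    calc r * ∑ i ∈ range m, r ^ i ≤ r * (1 / (1 - r)) := by gcongr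
      _ = r / (1 - r) := by ring
  calc ∑ b ∈ Icc 1 m, r ^ b / (1 - r) = (∑ b ∈ Icc 1 m, r ^ b) / (1 - r) := by
        rw [Finset.sum_div]
    _ ≤ (r / (1 - r)) / (1 - r) := by gcongr
    _ = r / (1 - r) ^ 2 := by rw [div_div, ← sq]

/-- `lim (1/n²) log|d_n(1/q)| = (3/π²) log|1/q|` for real `0 < |q| < 1`,
where `d_n(x) = ∏_{t=1}^n Φ_t(x)` is the lcm of the `x^l − 1`, `1 ≤ l ≤ n`. -/
theorem stmt16 (q : ℝ) (hq0 : q ≠ 0) (hq1 : |q| < 1) :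
    Filter.Tendsto
      (fun n : ℕ =>
        (1 / (n : ℝ) ^ 2) *
          Real.log |∏ t ∈ Finset.Icc 1 n, (Polynomial.cyclotomic t ℝ).eval (1 / q)|)
      Filter.atTop (nhds ((3 / Real.pi ^ 2) * Real.log |1 / q|)) := by
  set x : ℝ := 1 / q with hxdef
  have hqa : 0 < |q| := abs_pos.mpr hq0
  have hx : 1 < |x| := by
    rw [hxdef, abs_div, abs_one, lt_div_iff₀ hqa, one_mul]
    exact hq1
  have hxinv : x⁻¹ = q := by rw [hxdef]; field_simp
  set L := Real.log |x| with hL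
  set E : ℕ → ℝ := fun b => Real.log |1 - q ^ b| with hE
  set C := |q| / (1 - |q|) ^ 2 with hC
  set T : ℕ → ℝ := fun n => ∑ t ∈ Icc 1 n, (Nat.totient t : ℝ) with hT
  set R : ℕ → ℝ := fun n =>
    ∑ t ∈ Icc 1 n, ∑ p ∈ t.divisorsAntidiagonal, μ p.1 • E p.2 with hR
  have hdecomp : ∀ n : ℕ,
      Real.log |∏ t ∈ Icc 1 n, (Polynomial.cyclotomic t ℝ).eval x| = T n * L + R n := by
    intro n
    rw [Finset.abs_prod, Real.log_prod (fun t ht => abs_ne_zero.mpr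
      (aux_cyclo_ne x hx t (by rw [mem_Icc] at ht; omega)))]
    have e1 : ∀ t ∈ Icc 1 n, Real.log |(Polynomial.cyclotomic t ℝ).eval x|
        = ∑ p ∈ t.divisorsAntidiagonal, (μ p.1 • ((p.2 : ℝ) * L) + μ p.1 • E p.2) := by
      intro t ht
      rw [mem_Icc] at ht
      rw [aux_log_cyclo x hx t (by omega)]
      apply Finset.sum_congr rfl
      intro p hp
      have hp2 : 0 < p.2 :=
        Nat.pos_of_mem_divisors (Nat.snd_mem_divisors_of_mem_antidiagonal hp)
      rw [← smul_add, aux_log_split x hx p.2 hp2, hxinv]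
    rw [Finset.sum_congr rfl e1]
    simp only [Finset.sum_add_distrib]
    congr 1
    rw [hT, Finset.sum_mul]
    apply Finset.sum_congr rfl
    intro t ht
    rw [mem_Icc] at ht
    rw [← aux_totient_AD t (by omega), Finset.sum_mul]
    apply Finset.sum_congr rfl
    intro p hp
    rw [smul_mul_assoc]
  have hRbound : ∀ n : ℕ, |R n| ≤ n * C := by
    intro n
    calc |R n| ≤ ∑ t ∈ Icc 1 n, |∑ p ∈ t.divisorsAntidiagonal, μ p.1 • E p.2| :=
          Finset.abs_sum_le_sum_abs _ _
      _ ≤ ∑ t ∈ Icc 1 n, ∑ p ∈ t.divisorsAntidiagonal, |μ p.1 • E p.2| :=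
          Finset.sum_le_sum fun t _ => Finset.abs_sum_le_sum_abs _ _
      _ ≤ ∑ t ∈ Icc 1 n, ∑ p ∈ t.divisorsAntidiagonal, |E p.2| := by
          apply Finset.sum_le_sum
          intro t _
          apply Finset.sum_le_sum
          intro p _
          rw [zsmul_eq_mul, abs_mul]
          apply mul_le_of_le_one_left (abs_nonneg _)
          exact_mod_cast abs_moebius_le_one (n := p.1)
      _ = ∑ a ∈ Icc 1 n, ∑ b ∈ Icc 1 (n / a), |E b| := aux_swap n (fun _ b => |E b|)
      _ ≤ ∑ _a ∈ Icc 1 n, C := by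
          apply Finset.sum_le_sum
          intro a _
          calc ∑ b ∈ Icc 1 (n / a), |E b|
              ≤ ∑ b ∈ Icc 1 (n / a), |q| ^ b / (1 - |q|) := by
                apply Finset.sum_le_sum
                intro b hb
                rw [mem_Icc] at hb
                exact aux_E_bound q hq1 b (by omega)
            _ ≤ C := aux_geom_tail |q| (abs_nonneg q) hq1 (n / a)
      _ = n * C := by
          rw [Finset.sum_const, Nat.card_Icc]
          simp [nsmul_eq_mul]
  have hC0 : 0 ≤ C := by
    rw [hC]
    positivity
  have hmain : Tendsto (fun n : ℕ => T n / (n:ℝ)^2 * L) atTop (nhds (3 / Real.pi^2 * L)) :=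
    aux_totient_sum.mul_const L
  have hRlim : Tendsto (fun n : ℕ => R n * (1 / (n:ℝ)^2)) atTop (nhds 0) := by
    apply squeeze_zero_norm' (a := fun n : ℕ => C * (1 / (n:ℝ)))
    · filter_upwards [eventually_ge_atTop 1] with n hn
      have hn0 : (0:ℝ) < n := by exact_mod_cast hn
      rw [Real.norm_eq_abs, abs_mul, abs_of_nonneg (by positivity : (0:ℝ) ≤ 1 / (n:ℝ)^2)]
      calc |R n| * (1 / (n:ℝ)^2) ≤ (n * C) * (1 / (n:ℝ)^2) := by gcongr; exact hRbound n
        _ = C * (1 / n) := by field_simp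
    · simpa using tendsto_one_div_atTop_nhds_zero_nat.const_mul C
  have hsum := hmain.add hRlim
  rw [add_zero] at hsum
  apply hsum.congr'
  filter_upwards [eventually_ge_atTop 1] with n hn
  have hn0 : (n:ℝ) ≠ 0 := by
    have : (0:ℝ) < n := by exact_mod_cast hn
    linarith
  rw [hdecomp n]
  field_simp
end

section
/- Let q be a complex number with |q| ≠ 1, A even, r ≥ 1, A > 2r, and define S̃_n(q) = (q;q)_n^{A−2r} ∑_{k≥1} (1−q^{2k+n}) (q^{k−rn};q)_{rn} (q^{k+n+1};q)_{rn} / (q^k;q)_{n+1}^A · q^{k(A−2r)n/2 + kA/2 − k}. Then S̃_n(1/q) = −q^{n(r−1)} S̃_n(q). -/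
/-!
Every factor flips under `q ↦ q⁻¹` as `1 - q⁻¹ ^ e = -q ^ (-e) * (1 - q ^ e)`, so the identity
already holds term by term. Since `A` is even, the signs of the factors raised to the powers
`A - 2r` and `A` disappear, and the two products of length `rn` contribute equal signs; what is
left is the single sign of `1 - q ^ (2k + n)`. The powers of `q` collected from all factors add
up to `n (r - 1)` by summing the arithmetic progressions of exponents.
-/

/-- The very-well-poised series
`S̃_n(q) = (q;q)_n^{A−2r} ∑_{k≥1} (1−q^{2k+n}) (q^{k−rn};q)_{rn} (q^{k+n+1};q)_{rn}
            / (q^k;q)_{n+1}^A · q^{k((A−2r)n/2 + A/2 − 1)}`. -/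
noncomputable def St19 (A r n : ℕ) (x : ℂ) : ℂ :=
  (∏ i ∈ Finset.range n, (1 - x ^ (i + 1))) ^ (A - 2 * r) *
    ∑' k : ℕ,
      (1 - x ^ (2 * (k + 1) + n)) *
        (∏ i ∈ Finset.range (r * n), (1 - x ^ (((k : ℤ) + 1) - r * n + i))) *
        (∏ i ∈ Finset.range (r * n), (1 - x ^ (k + 1 + n + 1 + i))) /
        (∏ i ∈ Finset.range (n + 1), (1 - x ^ (k + 1 + i))) ^ A *
        x ^ ((k + 1) * ((A - 2 * r) * n / 2 + A / 2 - 1))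

open Finset

theorem two_mul_sum_range_add (m : ℕ) (c : ℤ) :
    2 * ∑ i ∈ range m, (c + i) = 2 * m * c + m * (m - 1) := by
  rw [sum_add_distrib, sum_const, card_range, mul_add, nsmul_eq_mul, ← Nat.cast_sum,
    mul_comm 2 (Nat.cast _), ← Nat.cast_ofNat, ← Nat.cast_mul, sum_range_id_mul_two]
  rcases m with _ | m <;> push_cast <;> ring

section Reflection

variable {K ι : Type*} [Field K] {q : K}

theorem one_sub_inv_zpow (hq : q ≠ 0) (e : ℤ) : 1 - q⁻¹ ^ e = -q ^ (-e) * (1 - q ^ e) := by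
  rw [inv_zpow, ← zpow_neg, neg_mul, mul_sub, mul_one, ← zpow_add₀ hq, neg_add_cancel, zpow_zero]
  ring

theorem one_sub_inv_pow (hq : q ≠ 0) (e : ℕ) : 1 - q⁻¹ ^ e = -q ^ (-(e : ℤ)) * (1 - q ^ e) := by
  exact_mod_cast one_sub_inv_zpow hq e

theorem prod_one_sub_inv_zpow (hq : q ≠ 0) (s : Finset ι) (f : ι → ℤ) :
    ∏ i ∈ s, (1 - q⁻¹ ^ f i) = (-1) ^ #s * q ^ (-∑ i ∈ s, f i) * ∏ i ∈ s, (1 - q ^ f i) := by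
  induction s using Finset.cons_induction with
  | empty => simp
  | cons a s ha ih =>
    rw [prod_cons, prod_cons, sum_cons, card_cons, ih, one_sub_inv_zpow hq, neg_add,
      zpow_add₀ hq, pow_succ]
    ring

theorem prod_one_sub_inv_pow (hq : q ≠ 0) (s : Finset ι) (f : ι → ℕ) :
    ∏ i ∈ s, (1 - q⁻¹ ^ f i)
      = (-1) ^ #s * q ^ (-∑ i ∈ s, (f i : ℤ)) * ∏ i ∈ s, (1 - q ^ f i) := by
  exact_mod_cast prod_one_sub_inv_zpow hq s fun i ↦ (f i : ℤ)

theorem prod_range_one_sub_inv_pow_succ_pow_two_mul (hq : q ≠ 0) (n a : ℕ) :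
    (∏ i ∈ range n, (1 - q⁻¹ ^ (i + 1))) ^ (2 * a)
      = q ^ (-(a * n * (n + 1) : ℤ)) * (∏ i ∈ range n, (1 - q ^ (i + 1))) ^ (2 * a) := by
  have hsum : 2 * ∑ i ∈ range n, ((i : ℤ) + 1) = n * (n + 1) := by
    simp_rw [add_comm _ (1 : ℤ)]
    rw [two_mul_sum_range_add]
    ring
  rw [prod_one_sub_inv_pow hq, mul_pow, mul_pow, card_range, ← pow_mul,
    Even.neg_one_pow ⟨n * a, by ring⟩, one_mul, ← zpow_natCast, ← zpow_mul]
  congr 2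
  push_cast
  linear_combination (-(a : ℤ)) * hsum

theorem reflected_term_eq (hq : q ≠ 0) (c P₁ P₂ D : K)
    (m m' s : ℕ) {e₀ e₁ e₂ e₃ E R : ℤ} (hR : -e₀ - e₁ - e₂ + 2 * s * e₃ - 2 * E = R) :
    -q ^ (-e₀) * c * ((-1) ^ m * q ^ (-e₁) * P₁) * ((-1) ^ m * q ^ (-e₂) * P₂) /
        ((-1) ^ m' * q ^ (-e₃) * D) ^ (2 * s) * q ^ (-E)
      = -q ^ R * (c * P₁ * P₂ / D ^ (2 * s) * q ^ E) := by
  have hsign : ((-1 : K) ^ m') ^ (2 * s) = 1 := by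
    rw [← pow_mul, Even.neg_one_pow ⟨m' * s, by ring⟩]
  have hsq : ((-1 : K) ^ m) ^ 2 = 1 := by
    rw [← pow_mul, Even.neg_one_pow ⟨m, by ring⟩]
  have hE : q ^ (-E)
      = q ^ R * q ^ E * (q ^ (-e₃)) ^ (2 * s) / (q ^ (-e₀) * q ^ (-e₁) * q ^ (-e₂)) := by
    rw [← zpow_natCast (q ^ (-e₃)), ← zpow_mul]
    simp only [← zpow_add₀ hq, ← zpow_sub₀ hq]
    congr 1
    push_cast
    linear_combination hR
  rw [mul_pow, mul_pow, hsign, one_mul, hE]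
  field_simp
  rw [hsq, mul_one]

end Reflection

noncomputable def st19Summand (A r n : ℕ) (x : ℂ) (k : ℕ) : ℂ :=
  (1 - x ^ (2 * (k + 1) + n)) *
    (∏ i ∈ range (r * n), (1 - x ^ (((k : ℤ) + 1) - r * n + i))) *
    (∏ i ∈ range (r * n), (1 - x ^ (k + 1 + n + 1 + i))) /
    (∏ i ∈ range (n + 1), (1 - x ^ (k + 1 + i))) ^ A *
    x ^ ((k + 1) * ((A - 2 * r) * n / 2 + A / 2 - 1))

theorem St19_eq_mul_tsum_st19Summand (A r n : ℕ) (x : ℂ) :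
    St19 A r n x = (∏ i ∈ range n, (1 - x ^ (i + 1))) ^ (A - 2 * r) *
      ∑' k, st19Summand A r n x k := rfl

theorem st19Summand_reflection_exponent {r s : ℕ} (hr : 1 ≤ r) (hrs : r < s) (n k : ℕ) :
    -((2 * (k + 1) + n : ℕ) : ℤ) - ∑ i ∈ range (r * n), ((k : ℤ) + 1 - r * n + i)
      - ∑ i ∈ range (r * n), ((k + 1 + n + 1 + i : ℕ) : ℤ)
      + 2 * s * ∑ i ∈ range (n + 1), ((k + 1 + i : ℕ) : ℤ)
      - 2 * ((k + 1) * ((s - r) * n + (s - 1)) : ℕ)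
      = (n * (r - 1) : ℕ) + (s - r : ℕ) * n * (n + 1) := by
  have h1 := two_mul_sum_range_add (r * n) ((k : ℤ) + 1 - r * n)
  have h2 := two_mul_sum_range_add (r * n) ((k : ℤ) + 1 + n + 1)
  have h3 := two_mul_sum_range_add (n + 1) ((k : ℤ) + 1)
  push_cast [Nat.cast_sub hr, Nat.cast_sub hrs.le, Nat.cast_sub (hr.trans hrs.le)] at h1 h2 h3 ⊢
  refine mul_left_cancel₀ two_ne_zero ?_
  linear_combination -h1 - h2 + 2 * s * h3

-- The surplus `(s - r) n (n + 1)` is absorbed by the prefactor `(q;q)_n ^ (A - 2r)`.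
theorem st19Summand_inv {r s : ℕ} (n k : ℕ) (hr : 1 ≤ r) (hrs : r < s) {q : ℂ} (hq : q ≠ 0) :
    st19Summand (2 * s) r n q⁻¹ k
      = -q ^ ((n * (r - 1) : ℕ) + (s - r : ℕ) * n * (n + 1) : ℤ)
          * st19Summand (2 * s) r n q k := by
  have hexp : (2 * s - 2 * r) * n / 2 + 2 * s / 2 - 1 = (s - r) * n + (s - 1) := by
    rw [← Nat.mul_sub, mul_assoc, Nat.mul_div_cancel_left _ two_pos,
      Nat.mul_div_cancel_left _ two_pos]
    omega
  have hR := st19Summand_reflection_exponent hr hrs n k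
  simp only [st19Summand, hexp]
  rw [one_sub_inv_pow hq, prod_one_sub_inv_zpow hq, prod_one_sub_inv_pow hq,
    prod_one_sub_inv_pow hq, inv_pow, ← zpow_natCast q ((k + 1) * _), ← zpow_neg, card_range,
    card_range]
  exact reflected_term_eq hq _ _ _ _ _ _ _ hR

theorem stmt19_general (A r n : ℕ) (hA : Even A) (hr : 1 ≤ r) (hAr : 2 * r < A)
    (q : ℂ) (hq0 : q ≠ 0) :
    St19 A r n q⁻¹ = -q ^ (n * (r - 1)) * St19 A r n q := by
  obtain ⟨s, hs⟩ := hA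
  obtain rfl : A = 2 * s := by omega
  have hrs : r < s := by omega
  simp_rw [St19_eq_mul_tsum_st19Summand, st19Summand_inv n _ hr hrs hq0,
    show 2 * s - 2 * r = 2 * (s - r) by omega, prod_range_one_sub_inv_pow_succ_pow_two_mul hq0]
  rw [tsum_mul_left, zpow_add₀ hq0, zpow_neg, zpow_natCast]
  field_simp

/-- `S̃_n(1/q) = −q^{n(r−1)} S̃_n(q)` for `|q| ≠ 1`. -/
theorem stmt19 (A r n : ℕ) (hA : Even A) (hr : 1 ≤ r) (hAr : 2 * r < A) (hn : 1 ≤ n)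
    (q : ℂ) (hq0 : q ≠ 0) (hq1 : ‖q‖ ≠ 1) :
    St19 A r n q⁻¹ = -q ^ (n * (r - 1)) * St19 A r n q :=
  stmt19_general A r n hA hr hAr q hq0
end
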